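/- arXiv:2303.03764 — 5 statements merged into one kernel-verified Lean document; each statement's English description precedes it below -/
import Mathlib

section
/- Lemma 1, part 1 (integrability). For every f ∈ D₀ and all integers k ≥ 1 and ℓ ≥ 0, the function t ↦ t^{−k+α−1} (d/dt)^ℓ [B₁T₁(t)ι₁f − B₂T₂(t)ι₂f] is Bochner integrable on (0,∞) with values in D. -/
/-!
Put `g m t = B₁ T₁(t) ι₁ (Aᵐ f) - B₂ T₂(t) ι₂ (Aᵐ f)`. Then `g m' = -g (m + 1)` on `[0, ∞)`,
`g m 0 = 0` by (ii), and each `g m` is bounded on `[0, ∞)`. Hence the `ℓ`-th derivative of `g 0`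
is `±g ℓ`, and `k` applications of the mean value inequality give `‖g ℓ t‖ ≤ C tᵏ / k!`.
The integrand is therefore `O(t^(α-1))` near `0` and `O(t^(α-1-k))` at infinity, both
integrable because `0 < α < 1 ≤ k`.
-/

open Set MeasureTheory Real

section DerivativeChain

variable {F : Type*} [NormedAddCommGroup F] [NormedSpace ℝ F] {g : ℕ → ℝ → F}

theorem iteratedDerivWithin_eq_neg_one_pow_smul {s : Set ℝ} (hs : UniqueDiffOn ℝ s)
    (hg : ∀ m, ∀ t ∈ s, HasDerivWithinAt (g m) (-g (m + 1) t) s t) (n : ℕ) :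
    ∀ t ∈ s, iteratedDerivWithin n (g 0) s t = (-1 : ℝ) ^ n • g n t := by
  induction n with
  | zero => intro t _; simp
  | succ n ih =>
    intro t ht
    rw [iteratedDerivWithin_succ, derivWithin_congr ih (ih t ht)]
    refine (((hg n t ht).const_smul ((-1 : ℝ) ^ n)).derivWithin (hs t ht)).trans ?_
    simp [pow_succ]

theorem norm_le_taylor_of_hasDerivWithinAt_neg {a : ℝ} {C : ℕ → ℝ}
    (hg : ∀ m, ∀ t ∈ Ici a, HasDerivWithinAt (g m) (-g (m + 1) t) (Ici a) t)
    (hga : ∀ m, g m a = 0) (hC : ∀ m, ∀ t ∈ Ici a, ‖g m t‖ ≤ C m) (n : ℕ) :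
    ∀ m, ∀ t ∈ Ici a, ‖g m t‖ ≤ C (m + n) * (t - a) ^ n / n.factorial := by
  induction n with
  | zero => simpa using hC
  | succ n ih =>
    intro m t ht
    have hB : ∀ x, HasDerivAt (fun x ↦ C (m + (n + 1)) * (x - a) ^ (n + 1) / (n + 1).factorial)
        (C (m + (n + 1)) * (x - a) ^ n / n.factorial) x := by
      intro x
      refine ((((hasDerivAt_id x).sub_const a).pow (n + 1)).const_mul (C (m + (n + 1)))
        |>.div_const ((n + 1).factorial : ℝ)).congr_deriv ?_
      rw [Nat.factorial_succ]
      push_cast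
      field_simp
      simp
    refine image_norm_le_of_norm_deriv_right_le_deriv_boundary
      (fun x hx ↦ (hg m x hx.1).continuousWithinAt.mono Icc_subset_Ici_self)
      (fun x hx ↦ (hg m x hx.1).mono (Ici_subset_Ici.mpr hx.1)) (by simp [hga]) hB
      (fun x hx ↦ ?_) (right_mem_Icc.mpr ht)
    rw [norm_neg, ← add_assoc, add_right_comm]
    exact ih (m + 1) x hx.1

end DerivativeChain

section Integrability

variable {F : Type*} [NormedAddCommGroup F] [NormedSpace ℝ F] {u : ℝ → F} {s : ℝ}

theorem integrableOn_Ioc_zero_one_rpow_smul {r c : ℝ} (hu : ContinuousOn u (Ioc 0 1))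
    (hbound : ∀ t ∈ Ioc (0 : ℝ) 1, ‖u t‖ ≤ c * t ^ r) (hsr : -1 < s + r) :
    IntegrableOn (fun t ↦ t ^ s • u t) (Ioc 0 1) := by
  have hdom : IntegrableOn (fun t : ℝ ↦ c * t ^ (s + r)) (Ioc 0 1) :=
    ((intervalIntegrable_iff_integrableOn_Ioc_of_le zero_le_one).mp
      (intervalIntegral.intervalIntegrable_rpow' hsr)).const_mul c
  refine hdom.mono' ?_ ?_
  · exact ((continuousOn_id.rpow_const fun t ht ↦ Or.inl ht.1.ne').smul hu).aestronglyMeasurable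
      measurableSet_Ioc
  · filter_upwards [ae_restrict_mem measurableSet_Ioc] with t ht
    have hts : 0 ≤ t ^ s := rpow_nonneg ht.1.le s
    calc ‖t ^ s • u t‖ = t ^ s * ‖u t‖ := by rw [norm_smul, norm_of_nonneg hts]
      _ ≤ t ^ s * (c * t ^ r) := mul_le_mul_of_nonneg_left (hbound t ht) hts
      _ = c * t ^ (s + r) := by rw [rpow_add ht.1]; ring

theorem integrableOn_Ioi_one_rpow_smul {c : ℝ} (hu : ContinuousOn u (Ioi 1))
    (hbound : ∀ t ∈ Ioi (1 : ℝ), ‖u t‖ ≤ c) (hs : s < -1) :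
    IntegrableOn (fun t ↦ t ^ s • u t) (Ioi 1) := by
  refine ((integrableOn_Ioi_rpow_of_lt hs one_pos).const_mul c).mono' ?_ ?_
  · exact ((continuousOn_id.rpow_const fun t ht ↦
      Or.inl (one_pos.trans (mem_Ioi.mp ht)).ne').smul hu).aestronglyMeasurable measurableSet_Ioi
  · filter_upwards [ae_restrict_mem measurableSet_Ioi] with t ht
    have hts : 0 ≤ t ^ s := rpow_nonneg (one_pos.trans (mem_Ioi.mp ht)).le s
    calc ‖t ^ s • u t‖ = t ^ s * ‖u t‖ := by rw [norm_smul, norm_of_nonneg hts]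
      _ ≤ t ^ s * c := mul_le_mul_of_nonneg_left (hbound t ht) hts
      _ = c * t ^ s := mul_comm _ _

theorem integrableOn_Ioi_rpow_smul {r c₀ c₁ : ℝ} (hu : ContinuousOn u (Ioi 0))
    (hbound₀ : ∀ t ∈ Ioc (0 : ℝ) 1, ‖u t‖ ≤ c₀ * t ^ r) (hbound₁ : ∀ t ∈ Ioi (1 : ℝ), ‖u t‖ ≤ c₁)
    (hsr : -1 < s + r) (hs : s < -1) :
    IntegrableOn (fun t ↦ t ^ s • u t) (Ioi 0) := by
  rw [← Ioc_union_Ioi_eq_Ioi zero_le_one]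
  exact (integrableOn_Ioc_zero_one_rpow_smul (hu.mono Ioc_subset_Ioi_self) hbound₀ hsr).union
    (integrableOn_Ioi_one_rpow_smul (hu.mono (Ioi_subset_Ioi zero_le_one)) hbound₁ hs)

end Integrability

theorem ContinuousLinearMap.norm_apply_apply_le {𝕜 E F G : Type*} [NontriviallyNormedField 𝕜]
    [SeminormedAddCommGroup E] [NormedSpace 𝕜 E] [SeminormedAddCommGroup F] [NormedSpace 𝕜 F]
    [SeminormedAddCommGroup G] [NormedSpace 𝕜 G] (B : F →L[𝕜] G) {T : E →L[𝕜] F} {Λ : ℝ}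
    (hT : ‖T‖ ≤ Λ) (x : E) : ‖B (T x)‖ ≤ ‖B‖ * Λ * ‖x‖ :=
  calc ‖B (T x)‖ ≤ ‖B‖ * ‖T x‖ := B.le_opNorm _
    _ ≤ ‖B‖ * (Λ * ‖x‖) := mul_le_mul_of_nonneg_left (T.le_of_opNorm_le hT x) (norm_nonneg _)
    _ = ‖B‖ * Λ * ‖x‖ := (mul_assoc _ _ _).symm

theorem lemma1_part1_general
    {E₁ E₂ D : Type*}
    [NormedAddCommGroup E₁] [NormedSpace ℂ E₁]
    [NormedAddCommGroup E₂] [NormedSpace ℂ E₂]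
    [NormedAddCommGroup D] [NormedSpace ℂ D]
    {D₀ : Type*} [AddCommGroup D₀] [Module ℂ D₀]
    (α : ℝ) (hα : α ∈ Set.Ioo (0 : ℝ) 1)
    (T₁ : ℝ → E₁ →L[ℂ] E₁) (T₂ : ℝ → E₂ →L[ℂ] E₂)
    (hT₁0 : T₁ 0 = 1) (hT₂0 : T₂ 0 = 1)
    (Λ₁ Λ₂ : ℝ)
    (hT₁ : ∀ t : ℝ, 0 ≤ t → ‖T₁ t‖ ≤ Λ₁)
    (hT₂ : ∀ t : ℝ, 0 ≤ t → ‖T₂ t‖ ≤ Λ₂)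
    (B₁ : E₁ →L[ℂ] D) (B₂ : E₂ →L[ℂ] D)
    (ι₁ : D₀ →ₗ[ℂ] E₁) (ι₂ : D₀ →ₗ[ℂ] E₂)
    (A : D₀ →ₗ[ℂ] D₀)
    -- (i): the m-th derivative of `t ↦ T_j(t) ι_j f` on `[0,∞)` is `(−1)^m T_j(t) ι_j (A^m f)`
    (hderiv₁ : ∀ (f : D₀) (m : ℕ) (t : ℝ), 0 ≤ t →
      HasDerivWithinAt (fun s : ℝ => T₁ s (ι₁ ((A ^ m) f)))
        (-(T₁ t (ι₁ ((A ^ (m + 1)) f)))) (Set.Ici 0) t)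
    (hderiv₂ : ∀ (f : D₀) (m : ℕ) (t : ℝ), 0 ≤ t →
      HasDerivWithinAt (fun s : ℝ => T₂ s (ι₂ ((A ^ m) f)))
        (-(T₂ t (ι₂ ((A ^ (m + 1)) f)))) (Set.Ici 0) t)
    -- (ii)
    (hB : ∀ f : D₀, B₁ (ι₁ f) = B₂ (ι₂ f))
    (f : D₀) (k ℓ : ℕ) (hk : 1 ≤ k) :
    IntegrableOn
      (fun t : ℝ => (t ^ (α - 1 - (k : ℝ))) •
        iteratedDerivWithin ℓ
          (fun s : ℝ => B₁ (T₁ s (ι₁ f)) - B₂ (T₂ s (ι₂ f))) (Set.Ici 0) t)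
      (Ioi (0 : ℝ)) := by
  set g : ℕ → ℝ → D := fun m t ↦ B₁ (T₁ t (ι₁ ((A ^ m) f))) - B₂ (T₂ t (ι₂ ((A ^ m) f)))
  set C : ℕ → ℝ := fun m ↦ ‖B₁‖ * Λ₁ * ‖ι₁ ((A ^ m) f)‖ + ‖B₂‖ * Λ₂ * ‖ι₂ ((A ^ m) f)‖
  have hg : ∀ m, ∀ t ∈ Ici (0 : ℝ), HasDerivWithinAt (g m) (-g (m + 1) t) (Ici 0) t := by
    intro m t ht
    have h₁ := (B₁.restrictScalars ℝ).hasFDerivAt.comp_hasDerivWithinAt t (hderiv₁ f m t ht)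
    have h₂ := (B₂.restrictScalars ℝ).hasFDerivAt.comp_hasDerivWithinAt t (hderiv₂ f m t ht)
    refine (h₁.sub h₂).congr_deriv ?_
    simp only [ContinuousLinearMap.coe_restrictScalars', map_neg, sub_neg_eq_add, neg_sub, g]
    abel
  have hg0 : ∀ m, g m 0 = 0 := fun m ↦ by simp [g, hT₁0, hT₂0, hB]
  have hC : ∀ m, ∀ t ∈ Ici (0 : ℝ), ‖g m t‖ ≤ C m := fun m t ht ↦
    (norm_sub_le _ _).trans (add_le_add (B₁.norm_apply_apply_le (hT₁ t ht) _)
      (B₂.norm_apply_apply_le (hT₂ t ht) _))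
  have hnorm : ∀ t, ‖(-1 : ℝ) ^ ℓ • g ℓ t‖ = ‖g ℓ t‖ := fun t ↦ by simp [norm_smul]
  have hiter : ∀ t ∈ Ioi (0 : ℝ), iteratedDerivWithin ℓ
      (fun s ↦ B₁ (T₁ s (ι₁ f)) - B₂ (T₂ s (ι₂ f))) (Ici 0) t = (-1 : ℝ) ^ ℓ • g ℓ t :=
    fun t ht ↦ by
      simpa [g] using iteratedDerivWithin_eq_neg_one_pow_smul (uniqueDiffOn_Ici 0) hg ℓ t
        (mem_Ici_of_Ioi ht)
  refine (integrableOn_Ioi_rpow_smul (u := fun t ↦ (-1 : ℝ) ^ ℓ • g ℓ t) (s := α - 1 - k) (r := k)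
    (c₀ := C (ℓ + k) / k.factorial) (c₁ := C ℓ) ?_ ?_ ?_ ?_ ?_).congr_fun
    (fun t ht ↦ by simp only [hiter t ht]) measurableSet_Ioi
  · exact (continuousOn_const.smul fun t ht ↦ (hg ℓ t ht).continuousWithinAt).mono
      Ioi_subset_Ici_self
  · intro t ht
    rw [hnorm, rpow_natCast, div_mul_eq_mul_div]
    exact norm_le_taylor_of_hasDerivWithinAt_neg hg hg0 hC k ℓ t ht.1.le |>.trans_eq (by simp)
  · exact fun t ht ↦ (hnorm t).trans_le <| hC ℓ t (Ioi_subset_Ici zero_le_one ht)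
  · linarith [hα.1]
  · have : (1 : ℝ) ≤ k := by exact_mod_cast hk
    linarith [hα.2]

/-- **Lemma 1, part 1 (integrability).** For every `f ∈ D₀` and all integers `k ≥ 1`, `ℓ ≥ 0`,
the function `t ↦ t^{−k+α−1} (d/dt)^ℓ [B₁T₁(t)ι₁f − B₂T₂(t)ι₂f]` is Bochner integrable on
`(0,∞)` with values in `D`. -/
theorem lemma1_part1
    {E₁ E₂ D : Type*}
    [NormedAddCommGroup E₁] [NormedSpace ℂ E₁]
    [NormedAddCommGroup E₂] [NormedSpace ℂ E₂]
    [NormedAddCommGroup D] [NormedSpace ℂ D]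
    {D₀ : Type*} [AddCommGroup D₀] [Module ℂ D₀]
    (α : ℝ) (hα : α ∈ Set.Ioo (0 : ℝ) 1)
    (T₁ : ℝ → E₁ →L[ℂ] E₁) (T₂ : ℝ → E₂ →L[ℂ] E₂)
    (hT₁0 : T₁ 0 = 1) (hT₂0 : T₂ 0 = 1)
    (Λ₁ Λ₂ : ℝ) (hΛ₁ : 1 ≤ Λ₁) (hΛ₂ : 1 ≤ Λ₂)
    (hT₁ : ∀ t : ℝ, 0 ≤ t → ‖T₁ t‖ ≤ Λ₁)
    (hT₂ : ∀ t : ℝ, 0 ≤ t → ‖T₂ t‖ ≤ Λ₂)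
    (B₁ : E₁ →L[ℂ] D) (B₂ : E₂ →L[ℂ] D)
    (ι₁ : D₀ →ₗ[ℂ] E₁) (ι₂ : D₀ →ₗ[ℂ] E₂)
    (hι₁ : Function.Injective ι₁) (hι₂ : Function.Injective ι₂)
    (A : D₀ →ₗ[ℂ] D₀)
    -- (i): the m-th derivative of `t ↦ T_j(t) ι_j f` on `[0,∞)` is `(−1)^m T_j(t) ι_j (A^m f)`
    (hderiv₁ : ∀ (f : D₀) (m : ℕ) (t : ℝ), 0 ≤ t →
      HasDerivWithinAt (fun s : ℝ => T₁ s (ι₁ ((A ^ m) f)))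
        (-(T₁ t (ι₁ ((A ^ (m + 1)) f)))) (Set.Ici 0) t)
    (hderiv₂ : ∀ (f : D₀) (m : ℕ) (t : ℝ), 0 ≤ t →
      HasDerivWithinAt (fun s : ℝ => T₂ s (ι₂ ((A ^ m) f)))
        (-(T₂ t (ι₂ ((A ^ (m + 1)) f)))) (Set.Ici 0) t)
    -- (ii)
    (hB : ∀ f : D₀, B₁ (ι₁ f) = B₂ (ι₂ f))
    (f : D₀) (k ℓ : ℕ) (hk : 1 ≤ k) :
    IntegrableOn
      (fun t : ℝ => (t ^ (α - 1 - (k : ℝ))) •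
        iteratedDerivWithin ℓ
          (fun s : ℝ => B₁ (T₁ s (ι₁ f)) - B₂ (T₂ s (ι₂ f))) (Set.Ici 0) t)
      (Ioi (0 : ℝ)) :=
  lemma1_part1_general α hα T₁ T₂ hT₁0 hT₂0 Λ₁ Λ₂ hT₁ hT₂ B₁ B₂ ι₁ ι₂ A hderiv₁ hderiv₂ hB f k ℓ hk
end

section
/- Lemma 1, part 2 (integration-by-parts identity for fractional powers). For every f ∈ D₀ and every integer k ≥ 1, the function t ↦ t^{α−1} [B₁T₁(t)ι₁(A^k f) − B₂T₂(t)ι₂(A^k f)] is Bochner integrable on (0,∞) and (1/Γ(α)) ∫₀^∞ t^{α−1} [B₁T₁(t)ι₁(A^k f) − B₂T₂(t)ι₂(A^k f)] dt = (1/Γ(α)) (∏_{j=0}^{k−1} (α−1−j)) ∫₀^∞ t^{−k+α−1} [B₁T₁(t)ι₁f − B₂T₂(t)ι₂f] dt; in the notation of the paper this reads B₁A₁^{−α}A₁^k f − B₂A₂^{−α}A₁^k f = (1/Γ(α)) ∏_{j=0}^{k−1}(α−1−j) ∫₀^∞ t^{−k+α−1}[B₁e^{−tA₁} − B₂e^{−tA₂}]f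 dt. -/
/-! With `F m t = B₁ T₁(t) ι₁(Aᵐ f) - B₂ T₂(t) ι₂(Aᵐ f)` we have `F m 0 = 0` by (ii),
`(F m)' = -F (m + 1)` on `[0, ∞)` by (i), and every `F m` is bounded. By Taylor's bound
`F m t = O(tᵖ)` at `0` for every `p`, so in each integration by parts against `t ^ β` (`β < 0`)
both boundary terms vanish, and `k` integrations by parts move the `k` derivatives onto
`t ^ (α - 1)`, producing the factor `∏ (α - 1 - j)`. The decay `‖F k t‖ ≤ C / t` for `k ≥ 1`
makes the left-hand integrand integrable at infinity. -/

open Set MeasureTheory Real Filter Topology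

structure IsNegDerivSeq {D : Type*} [NormedAddCommGroup D] [NormedSpace ℝ D]
    (F : ℕ → ℝ → D) : Prop where
  apply_zero : ∀ m, F m 0 = 0
  hasDerivWithinAt : ∀ m t, 0 ≤ t → HasDerivWithinAt (F m) (-F (m + 1) t) (Ici 0) t
  bounded : ∀ m, ∃ M, ∀ t, 0 ≤ t → ‖F m t‖ ≤ M

namespace IsNegDerivSeq

variable {D : Type*} [NormedAddCommGroup D] [NormedSpace ℝ D] {F : ℕ → ℝ → D}

theorem continuousOn (h : IsNegDerivSeq F) (m : ℕ) : ContinuousOn (F m) (Ici 0) :=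
  fun t ht => (h.hasDerivWithinAt m t ht).continuousWithinAt

theorem hasDerivAt (h : IsNegDerivSeq F) (m : ℕ) {t : ℝ} (ht : 0 < t) :
    HasDerivAt (F m) (-F (m + 1) t) t :=
  (h.hasDerivWithinAt m t ht.le).hasDerivAt (Ici_mem_nhds ht)

theorem exists_norm_le_mul_pow (h : IsNegDerivSeq F) (p : ℕ) :
    ∀ m, ∃ C, ∀ t, 0 ≤ t → ‖F m t‖ ≤ C * t ^ p := by
  induction p with
  | zero =>
    intro m
    obtain ⟨M, hM⟩ := h.bounded m
    exact ⟨M, by simpa using hM⟩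
  | succ p ih =>
    intro m
    obtain ⟨C, hC⟩ := ih (m + 1)
    refine ⟨C / (p + 1), fun t ht => ?_⟩
    have hB : ∀ x, HasDerivAt (fun x : ℝ => C / (p + 1) * x ^ (p + 1)) (C * x ^ p) x := by
      intro x
      refine ((hasDerivAt_pow (p + 1) x).const_mul (C / (p + 1))).congr_deriv ?_
      rw [Nat.add_sub_cancel]
      push_cast
      field_simp
    refine image_norm_le_of_norm_deriv_right_le_deriv_boundary
      ((h.continuousOn m).mono Icc_subset_Ici_self)
      (fun x hx => (h.hasDerivWithinAt m x hx.1).mono (Ici_subset_Ici.2 hx.1))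
      (by simp [h.apply_zero]) hB (fun x hx => ?_) ⟨ht, le_rfl⟩
    rw [norm_neg]
    exact hC x hx.1

theorem exists_norm_rpow_smul_le (h : IsNegDerivSeq F) (m : ℕ) (β : ℝ) :
    ∃ C γ : ℝ, 0 < γ ∧ ∀ t, 0 < t → ‖t ^ β • F m t‖ ≤ C * t ^ γ := by
  obtain ⟨p, hp⟩ := exists_nat_gt (-β)
  obtain ⟨C, hC⟩ := h.exists_norm_le_mul_pow p m
  refine ⟨C, β + p, by linarith, fun t ht => ?_⟩
  calc ‖t ^ β • F m t‖ = t ^ β * ‖F m t‖ := norm_smul_of_nonneg (rpow_nonneg ht.le β) _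
    _ ≤ t ^ β * (C * t ^ p) := by gcongr; exact hC t ht.le
    _ = C * t ^ (β + p) := by rw [rpow_add ht, rpow_natCast]; ring

theorem tendsto_rpow_smul_nhdsGT_zero (h : IsNegDerivSeq F) (m : ℕ) (β : ℝ) :
    Tendsto (fun t => t ^ β • F m t) (𝓝[>] 0) (𝓝 0) := by
  obtain ⟨C, γ, hγ, hC⟩ := h.exists_norm_rpow_smul_le m β
  have hlim : Tendsto (fun t : ℝ => C * t ^ γ) (𝓝[>] 0) (𝓝 0) := by
    have := ((continuousAt_rpow_const 0 γ (Or.inr hγ.le)).const_mul C).tendsto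
    rw [zero_rpow hγ.ne', mul_zero] at this
    exact tendsto_nhdsWithin_of_tendsto_nhds this
  exact squeeze_zero_norm' (eventually_nhdsWithin_of_forall hC) hlim

theorem integrableOn_Ioi_rpow_smul (h : IsNegDerivSeq F) {n : ℕ} {β γ C : ℝ}
    (hγ : β + γ < -1) (hle : ∀ t, 0 < t → ‖F n t‖ ≤ C * t ^ γ) :
    IntegrableOn (fun t => t ^ β • F n t) (Ioi 0) := by
  have hmeas : ∀ s ⊆ Ioi (0 : ℝ), MeasurableSet s →
      AEStronglyMeasurable (fun t => t ^ β • F n t) (volume.restrict s) := by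
    intro s hs hms
    refine ContinuousOn.aestronglyMeasurable (fun t ht => ?_) hms
    exact ((continuousAt_rpow_const t β (Or.inl (hs ht).ne')).smul
      (h.hasDerivAt n (hs ht)).continuousAt).continuousWithinAt
  rw [← Ioc_union_Ioi_eq_Ioi zero_le_one]
  refine IntegrableOn.union ?_ ?_
  · obtain ⟨C₀, γ₀, hγ₀, hC₀⟩ := h.exists_norm_rpow_smul_le n β
    have hint : IntegrableOn (fun t : ℝ => C₀ * t ^ γ₀) (Ioc 0 1) :=
      ((intervalIntegrable_iff_integrableOn_Ioc_of_le zero_le_one).1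
        (intervalIntegral.intervalIntegrable_rpow' (by linarith))).const_mul C₀
    refine hint.mono' (hmeas _ Ioc_subset_Ioi_self measurableSet_Ioc) ?_
    filter_upwards [ae_restrict_mem measurableSet_Ioc] with t ht using hC₀ t ht.1
  · have hint : IntegrableOn (fun t : ℝ => C * t ^ (β + γ)) (Ioi 1) :=
      (integrableOn_Ioi_rpow_of_lt hγ one_pos).const_mul C
    refine hint.mono' (hmeas _ (Ioi_subset_Ioi zero_le_one) measurableSet_Ioi) ?_
    filter_upwards [ae_restrict_mem measurableSet_Ioi] with t (ht : 1 < t)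
    have ht0 : 0 < t := one_pos.trans ht
    calc ‖t ^ β • F n t‖ = t ^ β * ‖F n t‖ := norm_smul_of_nonneg (rpow_nonneg ht0.le β) _
      _ ≤ t ^ β * (C * t ^ γ) := by gcongr; exact hle t ht0
      _ = C * t ^ (β + γ) := by rw [rpow_add ht0]; ring

theorem integrableOn_Ioi_rpow_smul_of_lt (h : IsNegDerivSeq F) (n : ℕ) {β : ℝ}
    (hβ : β < -1) : IntegrableOn (fun t => t ^ β • F n t) (Ioi 0) := by
  obtain ⟨M, hM⟩ := h.bounded n
  exact h.integrableOn_Ioi_rpow_smul (γ := 0) (by simpa using hβ)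
    fun t ht => by simpa using hM t ht.le

/-- Integration by parts: the boundary terms vanish at `0` by Taylor's bound and at `∞` as `β < 0`. -/
theorem integral_rpow_smul_succ (h : IsNegDerivSeq F) (m : ℕ) {β : ℝ} (hβ : β < 0)
    (hint : IntegrableOn (fun t => t ^ β • F (m + 1) t) (Ioi 0)) :
    ∫ t in Ioi 0, t ^ β • F (m + 1) t = β • ∫ t in Ioi 0, t ^ (β - 1) • F m t := by
  by_cases hD : CompleteSpace D
  swap
  · simp [integral_of_not_completeSpace hD]
  set G : ℝ → D := fun t => t ^ β • F m t
  have hG0 : G 0 = 0 := by simp [G, h.apply_zero]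
  have hderiv : ∀ t ∈ Ioi (0 : ℝ),
      HasDerivAt G (β • t ^ (β - 1) • F m t - t ^ β • F (m + 1) t) t := by
    intro t ht
    refine ((hasDerivAt_rpow_const (Or.inl ht.ne')).smul (h.hasDerivAt m ht)).congr_deriv ?_
    rw [smul_neg, mul_smul]
    abel
  have hcont : ContinuousWithinAt G (Ici 0) 0 := by
    rw [← continuousWithinAt_Ioi_iff_Ici, ContinuousWithinAt, hG0]
    exact h.tendsto_rpow_smul_nhdsGT_zero m β
  have hlim : Tendsto G atTop (𝓝 0) := by
    obtain ⟨M, hM⟩ := h.bounded m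
    have hpow : Tendsto (fun t : ℝ => M * t ^ β) atTop (𝓝 0) := by
      simpa using (tendsto_rpow_neg_atTop (y := -β) (by linarith)).const_mul M
    refine squeeze_zero_norm' ?_ hpow
    filter_upwards [eventually_gt_atTop 0] with t ht
    rw [norm_smul_of_nonneg (rpow_nonneg ht.le β), mul_comm]
    exact mul_le_mul_of_nonneg_right (hM t ht.le) (rpow_nonneg ht.le β)
  have hint' : IntegrableOn (fun t => β • t ^ (β - 1) • F m t) (Ioi 0) :=
    (h.integrableOn_Ioi_rpow_smul_of_lt m (by linarith)).smul β
  have hFTC := integral_Ioi_of_hasDerivAt_of_tendsto hcont hderiv (hint'.sub hint) hlim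
  rw [hG0, sub_zero, integral_sub hint' hint, integral_smul, sub_eq_zero] at hFTC
  exact hFTC.symm

theorem integral_rpow_smul_eq_prod_smul (h : IsNegDerivSeq F) (n : ℕ) {β : ℝ} (hβ : β < 0)
    (hint : IntegrableOn (fun t => t ^ β • F n t) (Ioi 0)) :
    ∫ t in Ioi 0, t ^ β • F n t =
      (∏ j ∈ Finset.range n, (β - j)) • ∫ t in Ioi 0, t ^ (β - n) • F 0 t := by
  induction n generalizing β with
  | zero => simp
  | succ n ih =>
    have hprod : β * ∏ j ∈ Finset.range n, (β - 1 - j) = ∏ j ∈ Finset.range (n + 1), (β - j) := by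
      rw [Finset.prod_range_succ', mul_comm]
      push_cast
      rw [sub_zero]
      exact congrArg (· * β) (Finset.prod_congr rfl fun j _ => by ring)
    have hexp : β - 1 - n = β - (n + 1 : ℕ) := by push_cast; ring
    rw [h.integral_rpow_smul_succ n hβ hint,
      ih (by linarith) (h.integrableOn_Ioi_rpow_smul_of_lt n (by linarith)), smul_smul, hprod,
      hexp]

end IsNegDerivSeq

section Semigroup

variable {E₁ E₂ D : Type*} [NormedAddCommGroup E₁] [NormedSpace ℂ E₁]
  [NormedAddCommGroup E₂] [NormedSpace ℂ E₂] [NormedAddCommGroup D] [NormedSpace ℂ D]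

theorem norm_map_sub_map_le (B₁ : E₁ →L[ℂ] D) (B₂ : E₂ →L[ℂ] D) {x₁ : E₁} {x₂ : E₂}
    {c₁ c₂ : ℝ} (h₁ : ‖x₁‖ ≤ c₁) (h₂ : ‖x₂‖ ≤ c₂) :
    ‖B₁ x₁ - B₂ x₂‖ ≤ ‖B₁‖ * c₁ + ‖B₂‖ * c₂ :=
  (norm_sub_le _ _).trans (add_le_add (B₁.le_opNorm_of_le h₁) (B₂.le_opNorm_of_le h₂))

theorem isNegDerivSeq_map_sub_map {T₁ : ℝ → E₁ →L[ℂ] E₁} {T₂ : ℝ → E₂ →L[ℂ] E₂}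
    {B₁ : E₁ →L[ℂ] D} {B₂ : E₂ →L[ℂ] D} {u₁ : ℕ → E₁} {u₂ : ℕ → E₂} {Λ₁ Λ₂ : ℝ}
    (hT₁0 : T₁ 0 = 1) (hT₂0 : T₂ 0 = 1)
    (hT₁ : ∀ t, 0 ≤ t → ‖T₁ t‖ ≤ Λ₁) (hT₂ : ∀ t, 0 ≤ t → ‖T₂ t‖ ≤ Λ₂)
    (hd₁ : ∀ m t, 0 ≤ t →
      HasDerivWithinAt (fun s => T₁ s (u₁ m)) (-T₁ t (u₁ (m + 1))) (Ici 0) t)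
    (hd₂ : ∀ m t, 0 ≤ t →
      HasDerivWithinAt (fun s => T₂ s (u₂ m)) (-T₂ t (u₂ (m + 1))) (Ici 0) t)
    (hB : ∀ m, B₁ (u₁ m) = B₂ (u₂ m)) :
    IsNegDerivSeq fun m t => B₁ (T₁ t (u₁ m)) - B₂ (T₂ t (u₂ m)) where
  apply_zero m := by simp [hT₁0, hT₂0, hB m]
  hasDerivWithinAt m t ht := by
    have h₁ := (B₁.restrictScalars ℝ).hasFDerivAt.comp_hasDerivWithinAt t (hd₁ m t ht)
    have h₂ := (B₂.restrictScalars ℝ).hasFDerivAt.comp_hasDerivWithinAt t (hd₂ m t ht)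
    refine (h₁.sub h₂).congr_deriv ?_
    simp only [ContinuousLinearMap.coe_restrictScalars', map_neg]
    abel
  bounded m := ⟨‖B₁‖ * (Λ₁ * ‖u₁ m‖) + ‖B₂‖ * (Λ₂ * ‖u₂ m‖), fun t ht =>
    norm_map_sub_map_le B₁ B₂ ((T₁ t).le_of_opNorm_le (hT₁ t ht) _)
      ((T₂ t).le_of_opNorm_le (hT₂ t ht) _)⟩

end Semigroup

theorem lemma1_part2_general
    {E₁ E₂ D : Type*}
    [NormedAddCommGroup E₁] [NormedSpace ℂ E₁]
    [NormedAddCommGroup E₂] [NormedSpace ℂ E₂]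
    [NormedAddCommGroup D] [NormedSpace ℂ D]
    {D₀ : Type*} [AddCommGroup D₀] [Module ℂ D₀]
    (α : ℝ) (hα : α ∈ Set.Ioo (0 : ℝ) 1)
    (T₁ : ℝ → E₁ →L[ℂ] E₁) (T₂ : ℝ → E₂ →L[ℂ] E₂)
    (hT₁0 : T₁ 0 = 1) (hT₂0 : T₂ 0 = 1)
    (Λ₁ Λ₂ : ℝ)
    (hT₁ : ∀ t : ℝ, 0 ≤ t → ‖T₁ t‖ ≤ Λ₁)
    (hT₂ : ∀ t : ℝ, 0 ≤ t → ‖T₂ t‖ ≤ Λ₂)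
    (B₁ : E₁ →L[ℂ] D) (B₂ : E₂ →L[ℂ] D)
    (ι₁ : D₀ →ₗ[ℂ] E₁) (ι₂ : D₀ →ₗ[ℂ] E₂)
    (A : D₀ →ₗ[ℂ] D₀)
    -- (i): the m-th derivative of `t ↦ T_j(t) ι_j f` on `[0,∞)` is `(−1)^m T_j(t) ι_j (A^m f)`
    (hderiv₁ : ∀ (f : D₀) (m : ℕ) (t : ℝ), 0 ≤ t →
      HasDerivWithinAt (fun s : ℝ => T₁ s (ι₁ ((A ^ m) f)))
        (-(T₁ t (ι₁ ((A ^ (m + 1)) f)))) (Set.Ici 0) t)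
    (hderiv₂ : ∀ (f : D₀) (m : ℕ) (t : ℝ), 0 ≤ t →
      HasDerivWithinAt (fun s : ℝ => T₂ s (ι₂ ((A ^ m) f)))
        (-(T₂ t (ι₂ ((A ^ (m + 1)) f)))) (Set.Ici 0) t)
    -- (ii)
    (hB : ∀ f : D₀, B₁ (ι₁ f) = B₂ (ι₂ f))
    -- (iii): analytic-semigroup decay
    (hdecay : ∀ g : D₀, ∃ C > (0 : ℝ), ∀ t : ℝ, 0 < t →
      ‖T₁ t (ι₁ (A g))‖ ≤ C / t ∧ ‖T₂ t (ι₂ (A g))‖ ≤ C / t)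
    (f : D₀) (k : ℕ) (hk : 1 ≤ k) :
    IntegrableOn
      (fun t : ℝ => (t ^ (α - 1)) •
        (B₁ (T₁ t (ι₁ ((A ^ k) f))) - B₂ (T₂ t (ι₂ ((A ^ k) f))))) (Ioi (0 : ℝ)) ∧
    (1 / Real.Gamma α) •
        (∫ t in Ioi (0 : ℝ), (t ^ (α - 1)) •
          (B₁ (T₁ t (ι₁ ((A ^ k) f))) - B₂ (T₂ t (ι₂ ((A ^ k) f))))) =
      (1 / Real.Gamma α) • (∏ j ∈ Finset.range k, (α - 1 - (j : ℝ))) •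
        ∫ t in Ioi (0 : ℝ), (t ^ (α - 1 - (k : ℝ))) •
          (B₁ (T₁ t (ι₁ f)) - B₂ (T₂ t (ι₂ f))) := by
  obtain ⟨k, rfl⟩ := Nat.exists_eq_add_of_le' hk
  set F : ℕ → ℝ → D := fun m t => B₁ (T₁ t (ι₁ ((A ^ m) f))) - B₂ (T₂ t (ι₂ ((A ^ m) f)))
  have hF : IsNegDerivSeq F := isNegDerivSeq_map_sub_map hT₁0 hT₂0 hT₁ hT₂
    (fun m => hderiv₁ f m) (fun m => hderiv₂ f m) (fun m => hB _)
  obtain ⟨C, -, hC⟩ := hdecay ((A ^ k) f)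
  have hFdecay : ∀ t, 0 < t → ‖F (k + 1) t‖ ≤ (‖B₁‖ * C + ‖B₂‖ * C) * t ^ (-1 : ℝ) := by
    intro t ht
    rw [rpow_neg_one, add_mul, mul_assoc, mul_assoc, ← div_eq_mul_inv]
    simp only [F, pow_succ', Module.End.mul_apply]
    exact norm_map_sub_map_le B₁ B₂ (hC t ht).1 (hC t ht).2
  have hint := hF.integrableOn_Ioi_rpow_smul (β := α - 1) (by linarith [hα.2]) hFdecay
  refine ⟨hint, ?_⟩
  rw [hF.integral_rpow_smul_eq_prod_smul (k + 1) (by linarith [hα.2]) hint]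
  simp [F]

/-- **Lemma 1, part 2 (integration-by-parts identity for fractional powers).**
For every `f ∈ D₀` and `k ≥ 1`, `t ↦ t^{α−1}[B₁T₁(t)ι₁(A^k f) − B₂T₂(t)ι₂(A^k f)]` is Bochner
integrable on `(0,∞)` and
`(1/Γ(α)) ∫₀^∞ t^{α−1}[B₁T₁(t)ι₁(A^k f) − B₂T₂(t)ι₂(A^k f)] dt
  = (1/Γ(α)) (∏_{j=0}^{k−1}(α−1−j)) ∫₀^∞ t^{−k+α−1}[B₁T₁(t)ι₁f − B₂T₂(t)ι₂f] dt`. -/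
theorem lemma1_part2
    {E₁ E₂ D : Type*}
    [NormedAddCommGroup E₁] [NormedSpace ℂ E₁]
    [NormedAddCommGroup E₂] [NormedSpace ℂ E₂]
    [NormedAddCommGroup D] [NormedSpace ℂ D]
    {D₀ : Type*} [AddCommGroup D₀] [Module ℂ D₀]
    (α : ℝ) (hα : α ∈ Set.Ioo (0 : ℝ) 1)
    (T₁ : ℝ → E₁ →L[ℂ] E₁) (T₂ : ℝ → E₂ →L[ℂ] E₂)
    (hT₁0 : T₁ 0 = 1) (hT₂0 : T₂ 0 = 1)
    (Λ₁ Λ₂ : ℝ) (hΛ₁ : 1 ≤ Λ₁) (hΛ₂ : 1 ≤ Λ₂)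
    (hT₁ : ∀ t : ℝ, 0 ≤ t → ‖T₁ t‖ ≤ Λ₁)
    (hT₂ : ∀ t : ℝ, 0 ≤ t → ‖T₂ t‖ ≤ Λ₂)
    (B₁ : E₁ →L[ℂ] D) (B₂ : E₂ →L[ℂ] D)
    (ι₁ : D₀ →ₗ[ℂ] E₁) (ι₂ : D₀ →ₗ[ℂ] E₂)
    (hι₁ : Function.Injective ι₁) (hι₂ : Function.Injective ι₂)
    (A : D₀ →ₗ[ℂ] D₀)
    -- (i): the m-th derivative of `t ↦ T_j(t) ι_j f` on `[0,∞)` is `(−1)^m T_j(t) ι_j (A^m f)`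
    (hderiv₁ : ∀ (f : D₀) (m : ℕ) (t : ℝ), 0 ≤ t →
      HasDerivWithinAt (fun s : ℝ => T₁ s (ι₁ ((A ^ m) f)))
        (-(T₁ t (ι₁ ((A ^ (m + 1)) f)))) (Set.Ici 0) t)
    (hderiv₂ : ∀ (f : D₀) (m : ℕ) (t : ℝ), 0 ≤ t →
      HasDerivWithinAt (fun s : ℝ => T₂ s (ι₂ ((A ^ m) f)))
        (-(T₂ t (ι₂ ((A ^ (m + 1)) f)))) (Set.Ici 0) t)
    -- (ii)
    (hB : ∀ f : D₀, B₁ (ι₁ f) = B₂ (ι₂ f))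
    -- (iii): analytic-semigroup decay
    (hdecay : ∀ g : D₀, ∃ C > (0 : ℝ), ∀ t : ℝ, 0 < t →
      ‖T₁ t (ι₁ (A g))‖ ≤ C / t ∧ ‖T₂ t (ι₂ (A g))‖ ≤ C / t)
    (f : D₀) (k : ℕ) (hk : 1 ≤ k) :
    IntegrableOn
      (fun t : ℝ => (t ^ (α - 1)) •
        (B₁ (T₁ t (ι₁ ((A ^ k) f))) - B₂ (T₂ t (ι₂ ((A ^ k) f))))) (Ioi (0 : ℝ)) ∧
    (1 / Real.Gamma α) •
        (∫ t in Ioi (0 : ℝ), (t ^ (α - 1)) •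
          (B₁ (T₁ t (ι₁ ((A ^ k) f))) - B₂ (T₂ t (ι₂ ((A ^ k) f))))) =
      (1 / Real.Gamma α) • (∏ j ∈ Finset.range k, (α - 1 - (j : ℝ))) •
        ∫ t in Ioi (0 : ℝ), (t ^ (α - 1 - (k : ℝ))) •
          (B₁ (T₁ t (ι₁ f)) - B₂ (T₂ t (ι₂ f))) :=
  lemma1_part2_general α hα T₁ T₂ hT₁0 hT₂0 Λ₁ Λ₂ hT₁ hT₂ B₁ B₂ ι₁ ι₂ A hderiv₁ hderiv₂ hB hdecay f
    k hk
end

section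
/- Operator transmutation formula (bounded case). Let H be a complex Hilbert space and A a bounded selfadjoint nonnegative linear operator on H. Then for every t > 0 and every f ∈ H, e^{−tA} f = (t^{−3/2}/(4√π)) ∫₀^∞ e^{−τ/(4t)} S(√τ, A) f dτ, where the integral is a Bochner integral over τ ∈ (0,∞). -/
/-!
Both sides are images under the continuous functional calculus of `A`, and the calculus commutes
with Bochner integrals of jointly continuous, uniformly dominated families. So it suffices to
prove the scalar identity `∫₀^∞ e^{-pτ} sin(√τ √x)/√x dτ = √(π/p) e^{-x/(4p)} / (2p)` for
`x ≥ 0`, and take `p = 1/(4t)`. Substituting `τ = s²` and integrating `2s e^{-ps²}` by parts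
turns its left side into `p⁻¹ ∫₀^∞ e^{-ps²} cos(s√x) ds`, the real part of a Gaussian Fourier
integral.
-/

open Set MeasureTheory Real

/-- `S(τ, A)`: the continuous functional calculus of `A` applied to the continuous function
`x ↦ sin(τ√x)/√x` on `[0,∞)`, extended by its limiting value `τ` at `x = 0`. -/
noncomputable def waveKernel {H : Type*} [NormedAddCommGroup H] [InnerProductSpace ℂ H]
    [CompleteSpace H] (τ : ℝ) (A : H →L[ℂ] H) : H →L[ℂ] H :=
  cfc (fun x : ℝ => if x = 0 then τ else Real.sin (τ * Real.sqrt x) / Real.sqrt x) A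

/-- `e^{−tA}`: the continuous functional calculus of `A` applied to `x ↦ e^{−tx}`. -/
noncomputable def heatOp {H : Type*} [NormedAddCommGroup H] [InnerProductSpace ℂ H]
    [CompleteSpace H] (t : ℝ) (A : H →L[ℂ] H) : H →L[ℂ] H :=
  cfc (fun x : ℝ => Real.exp (-(t * x))) A

lemma ite_sin_mul_sqrt_div_sqrt_eq_mul_sinc (s : ℝ) {x : ℝ} (hx : 0 ≤ x) :
    (if x = 0 then s else sin (s * √x) / √x) = s * sinc (s * √x) := by
  rcases hx.eq_or_lt with rfl | hx
  · simp
  rcases eq_or_ne s 0 with rfl | hs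
  · simp
  have hsqrt : √x ≠ 0 := (sqrt_pos.mpr hx).ne'
  rw [if_neg hx.ne', sinc_of_ne_zero (mul_ne_zero hs hsqrt)]
  field_simp

lemma abs_mul_sinc_mul_le (s b : ℝ) : |s * sinc (s * b)| ≤ |s| := by
  rw [abs_mul]
  exact mul_le_of_le_one_right (abs_nonneg s) (abs_sinc_le_one _)

lemma hasDerivAt_mul_sinc_mul (b s : ℝ) :
    HasDerivAt (fun s => s * sinc (s * b)) (cos (s * b)) s := by
  rcases eq_or_ne b 0 with rfl | hb
  · simpa using hasDerivAt_id' s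
  have hsin : (fun s => s * sinc (s * b)) = fun s => sin (s * b) / b := by
    funext s
    rcases eq_or_ne s 0 with rfl | hs
    · simp
    rw [sinc_of_ne_zero (mul_ne_zero hs hb)]
    field_simp
  rw [hsin]
  exact ((hasDerivAt_mul_const b).sin.div_const b).congr_deriv (by field_simp)

lemma integral_exp_neg_mul_sq_mul_cos {p : ℝ} (hp : 0 < p) (b : ℝ) :
    ∫ x, exp (-(p * x ^ 2)) * cos (x * b) = √(π / p) * exp (-(b ^ 2 / (4 * p))) := by
  have hre : (-p : ℂ).re < 0 := by simpa using hp
  have hre_exp (x : ℝ) : exp (-(p * x ^ 2)) * cos (x * b)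
      = (Complex.exp (-p * x ^ 2 + b * Complex.I * x + 0)).re := by
    rw [show -p * (x : ℂ) ^ 2 + b * Complex.I * x + 0
        = ((-(p * x ^ 2) : ℝ) : ℂ) + (x * b : ℝ) * Complex.I by push_cast; ring,
      Complex.exp_re, Complex.add_re, Complex.add_im, Complex.ofReal_re, Complex.ofReal_im,
      Complex.re_ofReal_mul, Complex.im_ofReal_mul]
    simp
  simp_rw [hre_exp]
  refine (integral_re (integrable_cexp_quadratic' hre _ 0)).trans ?_
  have hexp : 0 - (b * Complex.I) ^ 2 / (4 * -(p : ℂ)) = ((-(b ^ 2 / (4 * p)) : ℝ) : ℂ) := by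
    rw [mul_pow, Complex.I_sq]; push_cast; field_simp; ring
  rw [integral_cexp_quadratic hre, hexp, neg_neg, ← Complex.ofReal_div, ← Complex.ofReal_exp,
    show (1 / 2 : ℂ) = ((1 / 2 : ℝ) : ℂ) by push_cast; rfl, ← Complex.ofReal_cpow (by positivity),
    ← sqrt_eq_rpow, ← Complex.ofReal_mul]
  rfl

lemma integral_Ioi_exp_neg_mul_sq_mul_cos {p : ℝ} (hp : 0 < p) (b : ℝ) :
    ∫ x in Ioi 0, exp (-(p * x ^ 2)) * cos (x * b)
      = √(π / p) * exp (-(b ^ 2 / (4 * p))) / 2 := by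
  have hcos (x : ℝ) : cos (|x| * b) = cos (x * b) := by
    rcases abs_choice x with h | h <;> simp [h]
  have h := integral_comp_abs (f := fun x => exp (-(p * x ^ 2)) * cos (x * b))
  simp only [sq_abs, hcos, integral_exp_neg_mul_sq_mul_cos hp] at h
  linarith

lemma integral_Ioi_sq_mul_exp_neg_mul_sq_mul_sinc {p : ℝ} (hp : 0 < p) (b : ℝ) :
    ∫ s in Ioi 0, s ^ 2 * exp (-(p * s ^ 2)) * sinc (s * b)
      = (2 * p)⁻¹ * ∫ s in Ioi 0, exp (-(p * s ^ 2)) * cos (s * b) := by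
  set F := fun s => s * sinc (s * b) * (-exp (-(p * s ^ 2)) / (2 * p))
  have hF (s : ℝ) : HasDerivAt F (s ^ 2 * exp (-(p * s ^ 2)) * sinc (s * b)
      - (2 * p)⁻¹ * (exp (-(p * s ^ 2)) * cos (s * b))) s := by
    have hv : HasDerivAt (fun s => -exp (-(p * s ^ 2)) / (2 * p)) (s * exp (-(p * s ^ 2))) s := by
      refine ((((hasDerivAt_pow 2 s).const_mul p).fun_neg.exp.fun_neg).div_const
        (2 * p)).congr_deriv ?_
      field_simp
      ring
    refine ((hasDerivAt_mul_sinc_mul b s).fun_mul hv).congr_deriv ?_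
    field_simp
    ring
  have hI₁ : IntegrableOn (fun s => s ^ 2 * exp (-(p * s ^ 2)) * sinc (s * b)) (Ioi 0) := by
    refine (integrableOn_rpow_mul_exp_neg_mul_sq hp (s := 2) (by norm_num)).mono'
      (by fun_prop) ?_
    filter_upwards with s
    rw [rpow_two, neg_mul, norm_mul, norm_of_nonneg (by positivity), norm_eq_abs]
    exact mul_le_of_le_one_right (by positivity) (abs_sinc_le_one _)
  have hI₂ : IntegrableOn (fun s => exp (-(p * s ^ 2)) * cos (s * b)) (Ioi 0) := by
    refine (integrable_exp_neg_mul_sq hp).integrableOn.mono' (by fun_prop) ?_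
    filter_upwards with s
    rw [neg_mul, norm_mul, norm_of_nonneg (exp_pos _).le, norm_eq_abs]
    exact mul_le_of_le_one_right (exp_pos _).le (abs_cos_le_one _)
  have hIF : IntegrableOn F (Ioi 0) := by
    refine ((integrable_mul_exp_neg_mul_sq hp).integrableOn.div_const (2 * p)).mono'
      (by fun_prop) ?_
    filter_upwards [ae_restrict_mem measurableSet_Ioi] with s (hs : 0 < s)
    rw [norm_mul, norm_div, norm_neg, norm_of_nonneg (exp_pos _).le,
      norm_of_nonneg (by positivity : 0 ≤ 2 * p), norm_eq_abs, neg_mul, mul_div_assoc]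
    gcongr
    exact (abs_mul_sinc_mul_le s b).trans_eq (abs_of_pos hs)
  have hI := hI₁.sub (hI₂.const_mul (2 * p)⁻¹)
  have hFTC := integral_Ioi_of_hasDerivAt_of_tendsto' (fun s _ => hF s) hI
    (tendsto_zero_of_hasDerivAt_of_integrableOn_Ioi (fun s _ => hF s) hI hIF)
  rw [integral_sub hI₁ (hI₂.const_mul _), integral_const_mul,
    show F 0 = 0 by simp [F]] at hFTC
  linarith

lemma integral_Ioi_exp_neg_mul_mul_sqrt_mul_sinc {p : ℝ} (hp : 0 < p) (b : ℝ) :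
    ∫ τ in Ioi 0, exp (-(p * τ)) * (√τ * sinc (√τ * b))
      = √(π / p) * exp (-(b ^ 2 / (4 * p))) / (2 * p) := by
  rw [← integral_comp_rpow_Ioi_of_pos two_pos]
  have hsq : EqOn (fun s : ℝ => (2 * s ^ ((2 : ℝ) - 1)) • (exp (-(p * s ^ (2 : ℝ))) *
      (√(s ^ (2 : ℝ)) * sinc (√(s ^ (2 : ℝ)) * b))))
      (fun s => 2 * (s ^ 2 * exp (-(p * s ^ 2)) * sinc (s * b))) (Ioi 0) := by
    intro s (hs : 0 < s)
    simp only [rpow_two, sqrt_sq hs.le, smul_eq_mul]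
    norm_num
    ring
  rw [setIntegral_congr_fun measurableSet_Ioi hsq, integral_const_mul,
    integral_Ioi_sq_mul_exp_neg_mul_sq_mul_sinc hp, integral_Ioi_exp_neg_mul_sq_mul_cos hp]
  field_simp

/-- `e^{-pτ} sin(√τ √x)/√x`, written with `sinc` to make joint continuity and the bound
`e^{-pτ} √τ` evident. -/
noncomputable def transmutationKernel (p τ x : ℝ) : ℝ :=
  exp (-(p * τ)) * (√τ * sinc (√τ * √x))

lemma continuous_uncurry_transmutationKernel (p : ℝ) :
    Continuous (Function.uncurry (transmutationKernel p)) := by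
  unfold transmutationKernel
  fun_prop

lemma norm_transmutationKernel_le (p τ x : ℝ) :
    ‖transmutationKernel p τ x‖ ≤ exp (-(p * τ)) * √τ := by
  rw [transmutationKernel, norm_mul, norm_of_nonneg (exp_pos _).le, norm_eq_abs]
  gcongr
  exact (abs_mul_sinc_mul_le _ _).trans_eq (abs_of_nonneg (sqrt_nonneg τ))

lemma integrableOn_exp_neg_mul_mul_sqrt {p : ℝ} (hp : 0 < p) :
    IntegrableOn (fun τ => exp (-(p * τ)) * √τ) (Ioi 0) := by
  refine (integrableOn_rpow_mul_exp_neg_mul_rpow (s := 1 / 2) (p := 1) (by norm_num) one_pos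
    hp).congr_fun (fun τ _ => ?_) measurableSet_Ioi
  dsimp only
  rw [rpow_one, sqrt_eq_rpow, neg_mul, mul_comm]

lemma continuous_integral_transmutationKernel {p : ℝ} (hp : 0 < p) :
    Continuous fun x => ∫ τ in Ioi 0, transmutationKernel p τ x :=
  continuous_of_dominated
    (fun x => ((continuous_uncurry_transmutationKernel p).comp
      (Continuous.prodMk_left x)).aestronglyMeasurable)
    (fun x => .of_forall fun τ => norm_transmutationKernel_le p τ x)
    (integrableOn_exp_neg_mul_mul_sqrt hp)
    (.of_forall fun τ => (continuous_uncurry_transmutationKernel p).comp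
      (Continuous.prodMk_right τ))

lemma integral_transmutationKernel {p x : ℝ} (hp : 0 < p) (hx : 0 ≤ x) :
    ∫ τ in Ioi 0, transmutationKernel p τ x = √(π / p) * exp (-(x / (4 * p))) / (2 * p) := by
  simp only [transmutationKernel, integral_Ioi_exp_neg_mul_mul_sqrt_mul_sinc hp, sq_sqrt hx]

lemma exp_neg_mul_eq_integral_transmutationKernel {t x : ℝ} (ht : 0 < t) (hx : 0 ≤ x) :
    exp (-(t * x)) = t ^ (-(3 / 2 : ℝ)) / (4 * √π) *
      ∫ τ in Ioi 0, transmutationKernel (4 * t)⁻¹ τ x := by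
  have h32 : t ^ (-(3 / 2 : ℝ)) = (√t * t)⁻¹ := by
    rw [rpow_neg ht.le, show (3 / 2 : ℝ) = 1 / 2 + 1 by norm_num, rpow_add ht, rpow_one,
      sqrt_eq_rpow]
  have hsqrt : √(π / (4 * t)⁻¹) = 2 * √t * √π := by
    rw [div_inv_eq_mul, show π * (4 * t) = 2 ^ 2 * t * π by ring, sqrt_mul (by positivity),
      sqrt_mul (by positivity), sqrt_sq zero_le_two]
  have hexp : x / (4 * (4 * t)⁻¹) = t * x := by field_simp
  rw [integral_transmutationKernel (by positivity) hx, h32, hsqrt, hexp]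
  field_simp

section CStarAlgebra

variable {A : Type*} [CStarAlgebra A] {a : A}

lemma integrableOn_cfc_transmutationKernel {p : ℝ} (hp : 0 < p) (ha : IsSelfAdjoint a) :
    IntegrableOn (fun τ => cfc (transmutationKernel p τ) a) (Ioi 0) :=
  integrableOn_cfc measurableSet_Ioi _ _ a
    (continuous_uncurry_transmutationKernel p).continuousOn
    (.of_forall fun τ x _ => norm_transmutationKernel_le p τ x)
    (integrableOn_exp_neg_mul_mul_sqrt hp).hasFiniteIntegral ha

lemma cfc_exp_neg_mul_eq_integral [PartialOrder A] [StarOrderedRing A] {t : ℝ} (ht : 0 < t)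
    (ha : 0 ≤ a) :
    cfc (fun x => exp (-(t * x))) a = (t ^ (-(3 / 2 : ℝ)) / (4 * √π)) •
      ∫ τ in Ioi 0, cfc (transmutationKernel (4 * t)⁻¹ τ) a := by
  have hp : 0 < (4 * t)⁻¹ := by positivity
  rw [cfc_congr fun x hx =>
      exp_neg_mul_eq_integral_transmutationKernel ht (spectrum_nonneg_of_nonneg ha hx),
    cfc_const_mul _ _ _ (continuous_integral_transmutationKernel hp).continuousOn,
    cfc_setIntegral measurableSet_Ioi _ _ a (continuous_uncurry_transmutationKernel _).continuousOn
      (.of_forall fun τ x _ => norm_transmutationKernel_le _ τ x)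
      (integrableOn_exp_neg_mul_mul_sqrt hp).hasFiniteIntegral ha.isSelfAdjoint]

end CStarAlgebra

lemma cfc_transmutationKernel {H : Type*} [NormedAddCommGroup H] [InnerProductSpace ℂ H]
    [CompleteSpace H] {A : H →L[ℂ] H} (hA : A.IsPositive) (p τ : ℝ) :
    cfc (transmutationKernel p τ) A = exp (-(p * τ)) • waveKernel (√τ) A := by
  have hA' : 0 ≤ A := (A.nonneg_iff_isPositive).mpr hA
  rw [waveKernel, cfc_congr fun x hx =>
      ite_sin_mul_sqrt_div_sqrt_eq_mul_sinc (√τ) (spectrum_nonneg_of_nonneg hA' hx),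
    ← cfc_smul (exp (-(p * τ))) (fun x => √τ * sinc (√τ * √x)) A (by fun_prop)]
  rfl

/-- **Operator transmutation formula (bounded case).** For a bounded selfadjoint nonnegative
operator `A` on a complex Hilbert space `H`, every `t > 0` and `f ∈ H`,
`e^{−tA} f = (t^{−3/2}/(4√π)) ∫₀^∞ e^{−τ/(4t)} S(√τ, A) f dτ`. -/
theorem operator_transmutation
    {H : Type*} [NormedAddCommGroup H] [InnerProductSpace ℂ H] [CompleteSpace H]
    (A : H →L[ℂ] H) (hA : A.IsPositive)
    (t : ℝ) (ht : 0 < t) (f : H) :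
    heatOp t A f =
      (t ^ (-(3 / 2 : ℝ)) / (4 * Real.sqrt Real.pi)) •
        ∫ τ in Ioi (0 : ℝ),
          Real.exp (-(τ / (4 * t))) • (waveKernel (Real.sqrt τ) A) f := by
  rw [heatOp, cfc_exp_neg_mul_eq_integral ht ((A.nonneg_iff_isPositive).mpr hA), smul_apply,
    ContinuousLinearMap.integral_apply
      (integrableOn_cfc_transmutationKernel (by positivity) hA.isSelfAdjoint)]
  congr 1
  refine setIntegral_congr_fun measurableSet_Ioi fun τ _ => ?_
  rw [cfc_transmutationKernel hA, smul_apply, inv_mul_eq_div]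
end

section
/- Wave equation representation formula (formula (e13), bounded case). Let H be a complex Hilbert space, A a bounded selfadjoint nonnegative linear operator on H, and f : ℝ → H an infinitely differentiable function whose support is a compact subset of (0,∞). Then the function u(t) = ∫₀^t S(t−s, A) f(s) ds, t ≥ 0, is the unique twice continuously differentiable H-valued function on [0,∞) satisfying u''(t) + A u(t) = f(t) for all t ≥ 0 and u(0) = u'(0) = 0. -/
open Set MeasureTheory Real
open Filter Function Topology

section ParametricCFC

variable {A : Type*} {p : A → Prop} [NormedRing A] [StarRing A] [NormedAlgebra ℝ A]
  [CompleteSpace A] [ContinuousFunctionalCalculus ℝ A p] {a : A} {F F' : ℝ → ℝ → ℝ}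

theorem continuous_cfc_of_continuousOn_uncurry
    (hF : ContinuousOn (uncurry F) (univ ×ˢ spectrum ℝ a)) :
    Continuous fun t => cfc (F t) a := by
  refine continuous_iff_continuousAt.2 fun t => continuousAt_cfc_fun ?_ ?_
  · have hU : Icc (t - 1) (t + 1) ∈ 𝓝 t := Icc_mem_nhds (by linarith) (by linarith)
    have hunif : UniformContinuousOn (uncurry F) (Icc (t - 1) (t + 1) ×ˢ spectrum ℝ a) :=
      (isCompact_Icc.prod (spectrum.isCompact a)).uniformContinuousOn_of_continuous
        (hF.mono (prod_mono (subset_univ _) subset_rfl))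
    simpa [nhdsWithin_eq_nhds.2 hU] using
      hunif.tendstoUniformlyOn (mem_of_mem_nhds hU)
  · exact Eventually.of_forall fun s =>
      hF.comp (Continuous.prodMk_right s).continuousOn fun _ hx => ⟨mem_univ _, hx⟩

theorem cfc_intervalIntegral (hF : ContinuousOn (uncurry F) (univ ×ˢ spectrum ℝ a))
    (s t : ℝ) (ha : p a := by cfc_tac) :
    cfc (fun x => ∫ r in s..t, F r x) a = ∫ r in s..t, cfc (F r) a := by
  have hF_sub : ContinuousOn (uncurry F) (uIcc s t ×ˢ spectrum ℝ a) :=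
    hF.mono (prod_mono (subset_univ _) subset_rfl)
  obtain ⟨M, hM⟩ :=
    (isCompact_uIcc.prod (spectrum.isCompact a)).exists_bound_of_continuousOn hF_sub
  have hIoc : ∀ {b c : ℝ}, Ioc b c ⊆ uIcc s t →
      cfc (fun x => ∫ r in Ioc b c, F r x) a = ∫ r in Ioc b c, cfc (F r) a := fun hbc =>
    cfc_setIntegral measurableSet_Ioc F (fun _ => M) a
      (hF.mono (prod_mono (subset_univ _) subset_rfl))
      (ae_restrict_of_forall_mem measurableSet_Ioc fun r hr x hx => hM (r, x) ⟨hbc hr, hx⟩)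
      (hasFiniteIntegral_const M)
  rcases le_total s t with hst | hts
  · simp_rw [intervalIntegral.integral_of_le hst]
    exact hIoc (Ioc_subset_Icc_self.trans Icc_subset_uIcc)
  · simp_rw [intervalIntegral.integral_of_ge hts]
    rw [cfc_neg, hIoc (Ioc_subset_Icc_self.trans Icc_subset_uIcc')]

-- On the spectrum `F s - F t = ∫ r in t..s, F' r`, and `cfc` commutes with that integral.
theorem hasDerivAt_cfc_of_hasDerivAt
    (hF : ∀ x ∈ spectrum ℝ a, ∀ t, HasDerivAt (F · x) (F' t x) t)
    (hFc : ∀ t, ContinuousOn (F t) (spectrum ℝ a))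
    (hF' : ContinuousOn (uncurry F') (univ ×ˢ spectrum ℝ a)) (t : ℝ)
    (ha : p a := by cfc_tac) :
    HasDerivAt (fun s => cfc (F s) a) (cfc (F' t) a) t := by
  have hFTC : (fun s => cfc (F s) a) = fun s => cfc (F t) a + ∫ r in t..s, cfc (F' r) a := by
    funext s
    rw [← cfc_intervalIntegral hF', ← sub_eq_iff_eq_add', ← cfc_sub _ _ a (hFc s) (hFc t)]
    refine cfc_congr fun x hx => ?_
    rw [intervalIntegral.integral_eq_sub_of_hasDerivAt (fun r _ => hF x hx r)
      (hF'.comp (Continuous.prodMk_left x).continuousOn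
        fun _ _ => ⟨mem_univ _, hx⟩).intervalIntegrable]
  rw [hFTC]
  exact ((continuous_cfc_of_continuousOn_uncurry hF').integral_hasStrictDerivAt t t).hasDerivAt
    |>.const_add _

end ParametricCFC

-- The symbol of `waveKernel`; it vanishes for `x < 0`, where `√x = 0`.
noncomputable def sinSqrtDivSqrt (τ x : ℝ) : ℝ :=
  if x = 0 then τ else sin (τ * √x) / √x

theorem sinSqrtDivSqrt_eq_mul_sinc {x : ℝ} (τ : ℝ) (hx : 0 ≤ x) :
    sinSqrtDivSqrt τ x = τ * sinc (τ * √x) := by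
  rcases hx.eq_or_lt with rfl | hx
  · simp [sinSqrtDivSqrt]
  rcases eq_or_ne τ 0 with rfl | hτ
  · simp [sinSqrtDivSqrt]
  have hsqrt : √x ≠ 0 := (sqrt_pos.2 hx).ne'
  rw [sinSqrtDivSqrt, if_neg hx.ne', sinc_of_ne_zero (mul_ne_zero hτ hsqrt)]
  field_simp

theorem continuousOn_sinSqrtDivSqrt : ContinuousOn (uncurry sinSqrtDivSqrt) (univ ×ˢ Ici 0) :=
  (by fun_prop : Continuous fun p : ℝ × ℝ => p.1 * sinc (p.1 * √p.2)).continuousOn.congr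
    fun p hp => sinSqrtDivSqrt_eq_mul_sinc p.1 hp.2

theorem hasDerivAt_sinSqrtDivSqrt {x : ℝ} (hx : 0 ≤ x) (τ : ℝ) :
    HasDerivAt (sinSqrtDivSqrt · x) (cos (τ * √x)) τ := by
  rcases hx.eq_or_lt with rfl | hx
  · simpa [sinSqrtDivSqrt] using hasDerivAt_id' τ
  have hsqrt : √x ≠ 0 := (sqrt_pos.2 hx).ne'
  simp only [sinSqrtDivSqrt, if_neg hx.ne']
  exact (((hasDerivAt_mul_const √x).sin).div_const √x).congr_deriv (by field_simp)

theorem mul_sinSqrtDivSqrt (τ x : ℝ) : x * sinSqrtDivSqrt τ x = √x * sin (τ * √x) := by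
  rcases lt_trichotomy x 0 with hx | rfl | hx
  · simp [sinSqrtDivSqrt, sqrt_eq_zero_of_nonpos hx.le, hx.ne]
  · simp [sinSqrtDivSqrt]
  · have hsqrt : √x ≠ 0 := (sqrt_pos.2 hx).ne'
    rw [sinSqrtDivSqrt, if_neg hx.ne']
    field_simp
    rw [sq_sqrt hx.le]

theorem sinSqrtDivSqrt_sub (t s x : ℝ) :
    sinSqrtDivSqrt (t - s) x =
      sinSqrtDivSqrt t x * cos (s * √x) - cos (t * √x) * sinSqrtDivSqrt s x := by
  rcases eq_or_ne x 0 with rfl | hx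
  · simp [sinSqrtDivSqrt]
  simp only [sinSqrtDivSqrt, if_neg hx, sub_mul, sin_sub]
  ring

theorem cos_sq_add_mul_sinSqrtDivSqrt_sq (τ x : ℝ) :
    cos (τ * √x) ^ 2 + x * sinSqrtDivSqrt τ x ^ 2 = 1 := by
  rw [sq (sinSqrtDivSqrt τ x), ← mul_assoc, mul_sinSqrtDivSqrt]
  rcases le_or_gt x 0 with hx | hx
  · simp [sinSqrtDivSqrt, sqrt_eq_zero_of_nonpos hx]
  have hsqrt : √x ≠ 0 := (sqrt_pos.2 hx).ne'
  rw [sinSqrtDivSqrt, if_neg hx.ne']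
  field_simp
  exact cos_sq_add_sin_sq _

theorem HasDerivAt.clm_apply_restrictScalars {𝕜 : Type*} [NontriviallyNormedField 𝕜]
    [NormedAlgebra ℝ 𝕜] {E F : Type*} [NormedAddCommGroup E] [NormedSpace 𝕜 E]
    [NormedSpace ℝ E] [IsScalarTower ℝ 𝕜 E] [NormedAddCommGroup F] [NormedSpace 𝕜 F]
    [NormedSpace ℝ F] [IsScalarTower ℝ 𝕜 F] {c : ℝ → E →L[𝕜] F} {c' : E →L[𝕜] F}
    {u : ℝ → E} {u' : E} {t : ℝ} (hc : HasDerivAt c c' t) (hu : HasDerivAt u u' t) :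
    HasDerivAt (fun s => c s (u s)) (c' (u t) + c t u') t :=
  ((ContinuousLinearMap.restrictScalarsL 𝕜 E F ℝ ℝ).hasFDerivAt.comp_hasDerivAt t hc).clm_apply hu

section Kernels

variable {H : Type*} [NormedAddCommGroup H] [InnerProductSpace ℂ H] [CompleteSpace H]
  {A : H →L[ℂ] H}

noncomputable def cosKernel (τ : ℝ) (A : H →L[ℂ] H) : H →L[ℂ] H :=
  cfc (fun x : ℝ => cos (τ * √x)) A

theorem waveKernel_eq_cfc (τ : ℝ) (A : H →L[ℂ] H) :
    waveKernel τ A = cfc (sinSqrtDivSqrt τ) A :=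
  rfl

theorem continuous_cos_mul_sqrt (τ : ℝ) : Continuous fun x : ℝ => cos (τ * √x) := by fun_prop

theorem spectrum_subset_Ici_of_isPositive (hA : A.IsPositive) : spectrum ℝ A ⊆ Ici 0 :=
  fun _ hx => spectrum_nonneg_of_nonneg ((ContinuousLinearMap.nonneg_iff_isPositive A).2 hA) hx

theorem continuousOn_sinSqrtDivSqrt_spectrum (hA : A.IsPositive) (τ : ℝ) :
    ContinuousOn (sinSqrtDivSqrt τ) (spectrum ℝ A) :=
  continuousOn_sinSqrtDivSqrt.comp (Continuous.prodMk_right τ).continuousOn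
    fun _ hx => ⟨mem_univ _, spectrum_subset_Ici_of_isPositive hA hx⟩

theorem hasDerivAt_waveKernel (hA : A.IsPositive) (τ : ℝ) :
    HasDerivAt (fun τ => waveKernel τ A) (cosKernel τ A) τ :=
  hasDerivAt_cfc_of_hasDerivAt (F := sinSqrtDivSqrt)
    (fun _ hx => hasDerivAt_sinSqrtDivSqrt (spectrum_subset_Ici_of_isPositive hA hx))
    (continuousOn_sinSqrtDivSqrt_spectrum hA) (by fun_prop : Continuous _).continuousOn τ
    hA.isSelfAdjoint

theorem mul_waveKernel (hA : A.IsPositive) (τ : ℝ) :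
    A * waveKernel τ A = cfc (fun x => √x * sin (τ * √x)) A := by
  nth_rw 1 [waveKernel_eq_cfc, ← cfc_id ℝ A hA.isSelfAdjoint,
    ← cfc_mul _ _ A continuousOn_id (continuousOn_sinSqrtDivSqrt_spectrum hA τ)]
  exact cfc_congr fun x _ => mul_sinSqrtDivSqrt τ x

theorem hasDerivAt_cosKernel (hA : A.IsPositive) (τ : ℝ) :
    HasDerivAt (fun τ => cosKernel τ A) (-(A * waveKernel τ A)) τ := by
  rw [mul_waveKernel hA, ← cfc_neg]
  refine hasDerivAt_cfc_of_hasDerivAt (F := fun τ x => cos (τ * √x))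
    (F' := fun τ x => -(√x * sin (τ * √x))) (fun x _ t => ?_)
    (fun t => (continuous_cos_mul_sqrt t).continuousOn)
    (by fun_prop : Continuous _).continuousOn τ hA.isSelfAdjoint
  exact ((hasDerivAt_mul_const √x).cos).congr_deriv (by ring)

theorem continuous_waveKernel (hA : A.IsPositive) : Continuous fun τ => waveKernel τ A :=
  continuous_iff_continuousAt.2 fun τ => (hasDerivAt_waveKernel hA τ).continuousAt

theorem continuous_cosKernel (hA : A.IsPositive) : Continuous fun τ => cosKernel τ A :=
  continuous_iff_continuousAt.2 fun τ => (hasDerivAt_cosKernel hA τ).continuousAt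

theorem waveKernel_sub (hA : A.IsPositive) (t s : ℝ) :
    waveKernel (t - s) A = waveKernel t A * cosKernel s A - cosKernel t A * waveKernel s A := by
  have hSt := continuousOn_sinSqrtDivSqrt_spectrum hA t
  have hSs := continuousOn_sinSqrtDivSqrt_spectrum hA s
  have hCt := (continuous_cos_mul_sqrt t).continuousOn (s := spectrum ℝ A)
  have hCs := (continuous_cos_mul_sqrt s).continuousOn (s := spectrum ℝ A)
  calc waveKernel (t - s) A
      = cfc (fun x => sinSqrtDivSqrt t x * cos (s * √x) - cos (t * √x) * sinSqrtDivSqrt s x)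
          A :=
        cfc_congr fun x _ => sinSqrtDivSqrt_sub t s x
    _ = _ := by rw [cfc_sub .., cfc_mul .., cfc_mul ..]; rfl

theorem cosKernel_mul_self_add (hA : A.IsPositive) (τ : ℝ) :
    cosKernel τ A * cosKernel τ A + A * (waveKernel τ A * waveKernel τ A) = 1 := by
  have hS := continuousOn_sinSqrtDivSqrt_spectrum hA τ
  have hC := (continuous_cos_mul_sqrt τ).continuousOn (s := spectrum ℝ A)
  calc _ = cfc (fun x => cos (τ * √x) * cos (τ * √x) +
          x * (sinSqrtDivSqrt τ x * sinSqrtDivSqrt τ x)) A := by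
        rw [cfc_add .., cfc_mul .., cfc_mul (fun x => x) _ A, cfc_mul ..,
          cfc_id' ℝ A hA.isSelfAdjoint]
        rfl
    _ = 1 := by
        rw [← cfc_one ℝ A hA.isSelfAdjoint]
        exact cfc_congr fun x _ => by
          simpa [sq, mul_assoc] using cos_sq_add_mul_sinSqrtDivSqrt_sq τ x

end Kernels

section Duhamel

variable {H : Type*} [NormedAddCommGroup H] [InnerProductSpace ℂ H] [CompleteSpace H]
  {A : H →L[ℂ] H} {f : ℝ → H}

theorem integral_waveKernel_sub_apply (hA : A.IsPositive) (hf : Continuous f) (t : ℝ) :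
    ∫ s in 0..t, waveKernel (t - s) A (f s) =
      waveKernel t A (∫ s in 0..t, cosKernel s A (f s)) -
        cosKernel t A (∫ s in 0..t, waveKernel s A (f s)) := by
  have hC : Continuous fun s => cosKernel s A (f s) := (continuous_cosKernel hA).clm_apply hf
  have hS : Continuous fun s => waveKernel s A (f s) := (continuous_waveKernel hA).clm_apply hf
  simp_rw [waveKernel_sub hA t, sub_apply, mul_apply_eq_comp]
  rw [intervalIntegral.integral_sub ((continuous_const.clm_apply hC).intervalIntegrable _ _)
      ((continuous_const.clm_apply hS).intervalIntegrable _ _),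
    (waveKernel t A).intervalIntegral_comp_comm (hC.intervalIntegrable _ _),
    (cosKernel t A).intervalIntegral_comp_comm (hS.intervalIntegrable _ _)]

theorem hasDerivAt_integral_waveKernel_sub_apply (hA : A.IsPositive) (hf : Continuous f)
    (t : ℝ) :
    HasDerivAt (fun t => ∫ s in 0..t, waveKernel (t - s) A (f s))
      (cosKernel t A (∫ s in 0..t, cosKernel s A (f s)) +
        A (waveKernel t A (∫ s in 0..t, waveKernel s A (f s)))) t := by
  have hP := (((continuous_cosKernel hA).clm_apply hf).integral_hasStrictDerivAt 0 t).hasDerivAt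
  have hQ := (((continuous_waveKernel hA).clm_apply hf).integral_hasStrictDerivAt 0 t).hasDerivAt
  have hSC : waveKernel t A (cosKernel t A (f t)) = cosKernel t A (waveKernel t A (f t)) :=
    congrArg (· (f t)) (cfc_commute_cfc _ _ A).eq
  rw [funext (integral_waveKernel_sub_apply hA hf)]
  refine (((hasDerivAt_waveKernel hA t).clm_apply_restrictScalars hP).sub
    ((hasDerivAt_cosKernel hA t).clm_apply_restrictScalars hQ)).congr_deriv ?_
  rw [hSC, neg_apply, mul_apply_eq_comp]
  abel

theorem hasDerivAt_cosKernel_integral_add_waveKernel_integral (hA : A.IsPositive)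
    (hf : Continuous f) (t : ℝ) :
    HasDerivAt (fun t => cosKernel t A (∫ s in 0..t, cosKernel s A (f s)) +
        A (waveKernel t A (∫ s in 0..t, waveKernel s A (f s))))
      (f t - A (∫ s in 0..t, waveKernel (t - s) A (f s))) t := by
  have hP := (((continuous_cosKernel hA).clm_apply hf).integral_hasStrictDerivAt 0 t).hasDerivAt
  have hQ := (((continuous_waveKernel hA).clm_apply hf).integral_hasStrictDerivAt 0 t).hasDerivAt
  have hf_eq :
      cosKernel t A (cosKernel t A (f t)) + A (waveKernel t A (waveKernel t A (f t))) = f t := by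
    simpa [mul_apply_eq_comp] using congrArg (· (f t)) (cosKernel_mul_self_add hA t)
  refine (((hasDerivAt_cosKernel hA t).clm_apply_restrictScalars hP).add
    ((hasDerivAt_const t A).clm_apply_restrictScalars
      ((hasDerivAt_waveKernel hA t).clm_apply_restrictScalars hQ))).congr_deriv ?_
  conv_rhs => rw [integral_waveKernel_sub_apply hA hf, ← hf_eq]
  simp only [neg_apply, mul_apply_eq_comp, zero_apply, map_sub, map_add]
  abel

end Duhamel

theorem contDiff_two_of_hasDerivAt {E : Type*} [NormedAddCommGroup E] [NormedSpace ℝ E]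
    {u u' u'' : ℝ → E} (hu : ∀ t, HasDerivAt u (u' t) t) (hu' : ∀ t, HasDerivAt u' (u'' t) t)
    (hu'' : Continuous u'') : ContDiff ℝ 2 u := by
  have hd : deriv u = u' := funext fun t => (hu t).deriv
  have hd' : deriv u' = u'' := funext fun t => (hu' t).deriv
  rw [show (2 : WithTop ℕ∞) = 1 + 1 by norm_num, contDiff_succ_iff_deriv, hd,
    contDiff_one_iff_deriv, hd']
  exact ⟨fun t => (hu t).differentiableAt, by simp, fun t => (hu' t).differentiableAt, hu''⟩

theorem derivWithin_derivWithin_of_hasDerivAt {E : Type*} [NormedAddCommGroup E]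
    [NormedSpace ℝ E] {u u' u'' : ℝ → E} {s : Set ℝ} (hu : ∀ t, HasDerivAt u (u' t) t)
    (hu' : ∀ t, HasDerivAt u' (u'' t) t) (hs : UniqueDiffOn ℝ s) {t : ℝ} (ht : t ∈ s) :
    derivWithin (derivWithin u s) s t = u'' t :=
  ((hu' t).hasDerivWithinAt.congr (fun x hx => (hu x).hasDerivWithinAt.derivWithin (hs x hx))
    ((hu t).hasDerivWithinAt.derivWithin (hs t ht))).derivWithin (hs t ht)

theorem eq_of_hasDerivWithinAt_Ici_zero {E : Type*} [NormedAddCommGroup E] [NormedSpace ℝ E]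
    {g : ℝ → E} {a : ℝ} (hg : ∀ t ∈ Ici a, HasDerivWithinAt g 0 (Ici a) t) {t : ℝ}
    (ht : t ∈ Ici a) : g t = g a :=
  constant_of_has_deriv_right_zero
    (fun x hx => (hg x hx.1).continuousWithinAt.mono Icc_subset_Ici_self)
    (fun x hx => (hg x hx.1).mono (Ici_subset_Ici.2 hx.1)) t (right_mem_Icc.2 ht)

section Energy

variable {H : Type*} [NormedAddCommGroup H] [InnerProductSpace ℂ H] {A : H →L[ℂ] H}

theorem eqOn_zero_of_hasDerivWithinAt_wave (hA : A.IsPositive) {w w' : ℝ → H}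
    (hw : ∀ t ∈ Ici (0 : ℝ), HasDerivWithinAt w (w' t) (Ici 0) t)
    (hw' : ∀ t ∈ Ici (0 : ℝ), HasDerivWithinAt w' (-A (w t)) (Ici 0) t)
    (hw0 : w 0 = 0) (hw'0 : w' 0 = 0) : EqOn w 0 (Ici 0) := by
  -- The energy `‖w'‖² + ⟪A w, w⟫` is conserved because `A` is symmetric.
  have henergy : ∀ t ∈ Ici (0 : ℝ), HasDerivWithinAt
      (fun t => inner ℂ (w' t) (w' t) + inner ℂ (A (w t)) (w t)) 0 (Ici 0) t := fun t ht => by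
    have hAw : HasDerivWithinAt (fun t => A (w t)) (A (w' t)) (Ici 0) t :=
      (A.restrictScalars ℝ).hasFDerivAt.comp_hasDerivWithinAt t (hw t ht)
    refine (((hw' t ht).inner ℂ (hw' t ht)).add (hAw.inner ℂ (hw t ht))).congr_deriv ?_
    rw [inner_neg_left, inner_neg_right,
      show inner ℂ (A (w' t)) (w t) = inner ℂ (w' t) (A (w t)) from hA.isSymmetric _ _]
    ring
  have hw'_zero : ∀ t ∈ Ici (0 : ℝ), w' t = 0 := fun t ht => by
    have hE := congrArg RCLike.re (eq_of_hasDerivWithinAt_Ici_zero henergy ht)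
    simp only [hw0, hw'0, map_zero, inner_zero_left, add_zero, map_add, inner_self_eq_norm_sq]
      at hE
    have hpos := hA.re_inner_nonneg_left (w t)
    have hnorm : ‖w' t‖ ^ 2 = 0 := by linarith [sq_nonneg ‖w' t‖]
    simpa using hnorm
  intro t ht
  rw [eq_of_hasDerivWithinAt_Ici_zero (g := w) (fun s hs => hw'_zero s hs ▸ hw s hs) ht, hw0]
  rfl

theorem eqOn_of_wave_eq (hA : A.IsPositive) {v₁ v₂ : ℝ → H}
    (hv₁ : ContDiffOn ℝ 2 v₁ (Ici 0)) (hv₂ : ContDiffOn ℝ 2 v₂ (Ici 0))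
    (heq : ∀ t ∈ Ici (0 : ℝ), derivWithin (derivWithin v₁ (Ici 0)) (Ici 0) t + A (v₁ t) =
      derivWithin (derivWithin v₂ (Ici 0)) (Ici 0) t + A (v₂ t))
    (h0 : v₁ 0 = v₂ 0) (h0' : derivWithin v₁ (Ici 0) 0 = derivWithin v₂ (Ici 0) 0) :
    EqOn v₁ v₂ (Ici 0) := by
  have hd : ∀ {v : ℝ → H}, ContDiffOn ℝ 2 v (Ici 0) → ∀ t ∈ Ici (0 : ℝ),
      HasDerivWithinAt v (derivWithin v (Ici 0) t) (Ici 0) t ∧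
      HasDerivWithinAt (derivWithin v (Ici 0))
        (derivWithin (derivWithin v (Ici 0)) (Ici 0) t) (Ici 0) t := fun hv t ht =>
    ⟨(hv.differentiableOn (by norm_num) t ht).hasDerivWithinAt,
      ((hv.derivWithin (uniqueDiffOn_Ici 0) (m := 1) (by norm_num)).differentiableOn
        (by norm_num) t ht).hasDerivWithinAt⟩
  have hw := eqOn_zero_of_hasDerivWithinAt_wave hA (w := fun t => v₁ t - v₂ t)
    (fun t ht => ((hd hv₁ t ht).1.sub (hd hv₂ t ht).1))
    (fun t ht => ((hd hv₁ t ht).2.sub (hd hv₂ t ht).2).congr_deriv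
      (by rw [map_sub, eq_sub_of_add_eq (heq t ht)]; abel))
    (sub_eq_zero.2 h0) (sub_eq_zero.2 h0')
  exact fun t ht => sub_eq_zero.1 (hw ht)

end Energy

theorem wave_representation_general
    {H : Type*} [NormedAddCommGroup H] [InnerProductSpace ℂ H] [CompleteSpace H]
    (A : H →L[ℂ] H) (hA : A.IsPositive)
    (f : ℝ → H) (hf : ContDiff ℝ (⊤ : ℕ∞) f) :
    (ContDiffOn ℝ 2 (fun t : ℝ => ∫ s in (0 : ℝ)..t, waveKernel (t - s) A (f s)) (Ici 0) ∧
      (∀ t ∈ Ici (0 : ℝ),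
        derivWithin
            (derivWithin (fun t : ℝ => ∫ s in (0 : ℝ)..t, waveKernel (t - s) A (f s)) (Ici 0))
            (Ici 0) t +
          A (∫ s in (0 : ℝ)..t, waveKernel (t - s) A (f s)) = f t) ∧
      (∫ s in (0 : ℝ)..(0 : ℝ), waveKernel (0 - s) A (f s)) = 0 ∧
      derivWithin (fun t : ℝ => ∫ s in (0 : ℝ)..t, waveKernel (t - s) A (f s)) (Ici 0) 0 = 0) ∧
    ∀ v : ℝ → H,
      (ContDiffOn ℝ 2 v (Ici 0) ∧
        (∀ t ∈ Ici (0 : ℝ),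
          derivWithin (derivWithin v (Ici 0)) (Ici 0) t + A (v t) = f t) ∧
        v 0 = 0 ∧ derivWithin v (Ici 0) 0 = 0) →
      EqOn v (fun t : ℝ => ∫ s in (0 : ℝ)..t, waveKernel (t - s) A (f s)) (Ici 0) := by
  set u := fun t : ℝ => ∫ s in (0 : ℝ)..t, waveKernel (t - s) A (f s)
  set u' := fun t : ℝ => cosKernel t A (∫ s in (0 : ℝ)..t, cosKernel s A (f s)) +
    A (waveKernel t A (∫ s in (0 : ℝ)..t, waveKernel s A (f s)))
  have hu : ∀ t, HasDerivAt u (u' t) t :=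
    hasDerivAt_integral_waveKernel_sub_apply hA hf.continuous
  have hu' : ∀ t, HasDerivAt u' (f t - A (u t)) t :=
    hasDerivAt_cosKernel_integral_add_waveKernel_integral hA hf.continuous
  have hu_cont : Continuous u := continuous_iff_continuousAt.2 fun t => (hu t).continuousAt
  have hu_C2 : ContDiffOn ℝ 2 u (Ici 0) :=
    (contDiff_two_of_hasDerivAt hu hu' (hf.continuous.sub (A.continuous.comp hu_cont))).contDiffOn
  have hu_eq : ∀ t ∈ Ici (0 : ℝ), derivWithin (derivWithin u (Ici 0)) (Ici 0) t + A (u t) = f t :=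
    fun t ht => by rw [derivWithin_derivWithin_of_hasDerivAt hu hu' (uniqueDiffOn_Ici 0) ht]; abel
  have hu0 : u 0 = 0 := intervalIntegral.integral_same
  have hu'0 : derivWithin u (Ici 0) 0 = 0 := by
    rw [(hu 0).hasDerivWithinAt.derivWithin (uniqueDiffOn_Ici 0 0 self_mem_Ici)]
    simp [u']
  refine ⟨⟨hu_C2, hu_eq, hu0, hu'0⟩, fun v ⟨hv, hv_eq, hv0, hv'0⟩ => ?_⟩
  exact eqOn_of_wave_eq hA hv hu_C2 (fun t ht => by rw [hv_eq t ht, hu_eq t ht])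
    (hv0.trans hu0.symm) (hv'0.trans hu'0.symm)

/-- **Wave equation representation formula** (formula (e13), bounded case).
`u(t) = ∫₀^t S(t−s, A) f(s) ds` is the unique twice continuously differentiable `H`-valued
function on `[0,∞)` with `u'' + Au = f` on `[0,∞)` and `u(0) = u'(0) = 0`. -/
theorem wave_representation
    {H : Type*} [NormedAddCommGroup H] [InnerProductSpace ℂ H] [CompleteSpace H]
    (A : H →L[ℂ] H) (hA : A.IsPositive)
    (f : ℝ → H) (hf : ContDiff ℝ (⊤ : ℕ∞) f)
    (hfc : HasCompactSupport f) (hfs : tsupport f ⊆ Ioi (0 : ℝ)) :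
    (ContDiffOn ℝ 2 (fun t : ℝ => ∫ s in (0 : ℝ)..t, waveKernel (t - s) A (f s)) (Ici 0) ∧
      (∀ t ∈ Ici (0 : ℝ),
        derivWithin
            (derivWithin (fun t : ℝ => ∫ s in (0 : ℝ)..t, waveKernel (t - s) A (f s)) (Ici 0))
            (Ici 0) t +
          A (∫ s in (0 : ℝ)..t, waveKernel (t - s) A (f s)) = f t) ∧
      (∫ s in (0 : ℝ)..(0 : ℝ), waveKernel (0 - s) A (f s)) = 0 ∧
      derivWithin (fun t : ℝ => ∫ s in (0 : ℝ)..t, waveKernel (t - s) A (f s)) (Ici 0) 0 = 0) ∧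
    ∀ v : ℝ → H,
      (ContDiffOn ℝ 2 v (Ici 0) ∧
        (∀ t ∈ Ici (0 : ℝ),
          derivWithin (derivWithin v (Ici 0)) (Ici 0) t + A (v t) = f t) ∧
        v 0 = 0 ∧ derivWithin v (Ici 0) 0 = 0) →
      EqOn v (fun t : ℝ => ∫ s in (0 : ℝ)..t, waveKernel (t - s) A (f s)) (Ici 0) :=
  wave_representation_general A hA f hf
end

section
/- Proposition 2 (bounded case). Let H₁, H₂ be complex Hilbert spaces, A_j a bounded selfadjoint nonnegative linear operator on H_j for j = 1,2, D a complex Banach space, and B_j : H_j → D a bounded linear operator. Let D₀ be a complex vector space with linear maps ι_j : D₀ → H_j, and assume B₁ e^{−tA₁} ι₁ f = B₂ e^{−tA₂} ι₂ f for every t > 0 and every f ∈ D₀. Then for every function F : ℝ → D₀ such that ι_j ∘ F : ℝ → H_j is infinitely differentiable with support a compact subset of (0,∞) for j = 1,2, and for every t ≥ 0, one has B₁ ∫₀^t S(t−s, A₁) ι₁ F(s) ds = B₂ ∫₀^t S(t−s, A₂) ι₂ F(s) ds; that is, the restrictions B₁ W_{A₁}(F) and B₂ W_{A₂}(F) of the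 solutions of the wave equations u'' + A_j u = F, u(0) = u'(0) = 0, coincide. -/
open Set MeasureTheory Real

open scoped Topology

set_option maxHeartbeats 1600000


noncomputable def mySinc (y : ℝ) : ℝ := if y = 0 then 1 else Real.sin y / y

lemma continuous_mySinc : Continuous mySinc := by
  rw [continuous_iff_continuousAt]
  intro y
  rcases eq_or_ne y 0 with rfl | hy
  · rw [← continuousWithinAt_compl_self]
    have h : Filter.Tendsto (slope Real.sin 0) (𝓝[≠] (0:ℝ)) (𝓝 (Real.cos 0)) :=
      hasDerivAt_iff_tendsto_slope.mp (Real.hasDerivAt_sin 0)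
    rw [Real.cos_zero] at h
    have h0 : mySinc 0 = 1 := if_pos rfl
    rw [ContinuousWithinAt, h0]
    refine h.congr' ?_
    filter_upwards [self_mem_nhdsWithin] with z hz
    have hz' : z ≠ 0 := hz
    simp [slope, mySinc, hz', Real.sin_zero, div_eq_inv_mul]
  · have hc : ContinuousAt (fun z => Real.sin z / z) y :=
      Real.continuous_sin.continuousAt.div continuousAt_id hy
    refine hc.congr ?_
    filter_upwards [isOpen_compl_singleton.mem_nhds hy] with z hz
    have hz' : z ≠ 0 := hz
    simp [mySinc, hz']

noncomputable def gwave (τ x : ℝ) : ℝ := τ * mySinc (τ * Real.sqrt x)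

lemma continuous_gwave : Continuous fun p : ℝ × ℝ => gwave p.1 p.2 :=
  continuous_fst.mul (continuous_mySinc.comp
    (continuous_fst.mul (Real.continuous_sqrt.comp continuous_snd)))

lemma gwave_eq (τ : ℝ) {x : ℝ} (hx : 0 ≤ x) :
    (if x = 0 then τ else Real.sin (τ * Real.sqrt x) / Real.sqrt x) = gwave τ x := by
  rcases eq_or_ne x 0 with rfl | h
  · simp [gwave, mySinc]
  · have hxpos : 0 < x := lt_of_le_of_ne hx (Ne.symm h)
    have hs : Real.sqrt x ≠ 0 := ne_of_gt (Real.sqrt_pos.mpr hxpos)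
    rcases eq_or_ne τ 0 with rfl | hτ
    · simp [gwave, mySinc]
    · have hts : τ * Real.sqrt x ≠ 0 := mul_ne_zero hτ hs
      rw [if_neg h]
      rw [gwave, mySinc, if_neg hts]
      field_simp
noncomputable def expCM (s : Set ℝ) (t : ℝ) : C(s, ℝ) :=
  ⟨fun x => Real.exp (-(t * (x : ℝ))),
    Real.continuous_exp.comp (continuous_const.mul continuous_subtype_val).neg⟩

noncomputable def expSubmonoid (s : Set ℝ) : Submonoid C(s, ℝ) where
  carrier := {q | q = 1 ∨ ∃ t : ℝ, 0 < t ∧ q = expCM s t}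
  one_mem' := Or.inl rfl
  mul_mem' := by
    rintro a b (rfl | ⟨t, ht, rfl⟩) (rfl | ⟨u, hu, rfl⟩)
    · exact Or.inl (one_mul 1)
    · exact Or.inr ⟨u, hu, one_mul _⟩
    · exact Or.inr ⟨t, ht, mul_one _⟩
    · refine Or.inr ⟨t + u, add_pos ht hu, ?_⟩
      ext x
      simp only [ContinuousMap.mul_apply, expCM, ContinuousMap.coe_mk, ← Real.exp_add]
      congr 1
      ring

lemma spec_subset {H : Type*} [NormedAddCommGroup H] [InnerProductSpace ℂ H]
    [CompleteSpace H] (A : H →L[ℂ] H) (hA : A.IsPositive) :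
    spectrum ℝ A ⊆ Set.Icc 0 ‖A‖ := by
  rcases subsingleton_or_nontrivial H with hs | hn
  · intro x hx
    exact absurd (spectrum.mem_iff.mp hx) (not_not.mpr (isUnit_of_subsingleton _))
  · intro x hx
    refine ⟨spectrum_nonneg_of_nonneg ((ContinuousLinearMap.nonneg_iff_isPositive A).mpr hA) hx, ?_⟩
    calc x ≤ ‖x‖ := le_abs_self x
      _ ≤ ‖A‖ := spectrum.norm_le_norm_of_mem hx

lemma continuous_cfc_param {H : Type*} [NormedAddCommGroup H] [InnerProductSpace ℂ H]
    [CompleteSpace H] (A : H →L[ℂ] H) (hA : IsSelfAdjoint A) (g : ℝ → ℝ → ℝ)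
    (hg : Continuous fun p : ℝ × ℝ => g p.1 p.2) :
    Continuous fun τ => cfc (g τ) A := by
  let Gc : C(ℝ × spectrum ℝ A, ℝ) :=
    ⟨fun p => g p.1 (p.2 : ℝ),
      hg.comp (continuous_fst.prodMk (continuous_subtype_val.comp continuous_snd))⟩
  have key : (fun τ => cfc (g τ) A) = fun τ => cfcHom hA (Gc.curry τ) := by
    funext τ
    rw [cfc_apply (g τ) A hA ((hg.comp (continuous_const.prodMk continuous_id)).continuousOn)]
    congr 1
  rw [key]
  exact (cfcHom_isClosedEmbedding hA).continuous.comp Gc.curry.continuous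

lemma key_lemma
    {H₁ H₂ : Type*}
    [NormedAddCommGroup H₁] [InnerProductSpace ℂ H₁] [CompleteSpace H₁]
    [NormedAddCommGroup H₂] [InnerProductSpace ℂ H₂] [CompleteSpace H₂]
    {D : Type*} [NormedAddCommGroup D] [NormedSpace ℂ D]
    {D₀ : Type*} [AddCommGroup D₀] [Module ℂ D₀]
    (A₁ : H₁ →L[ℂ] H₁) (hA₁ : A₁.IsPositive)
    (A₂ : H₂ →L[ℂ] H₂) (hA₂ : A₂.IsPositive)
    (B₁ : H₁ →L[ℂ] D) (B₂ : H₂ →L[ℂ] D)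
    (ι₁ : D₀ →ₗ[ℂ] H₁) (ι₂ : D₀ →ₗ[ℂ] H₂)
    (heq : ∀ (f : D₀) (t : ℝ), 0 < t →
      B₁ (heatOp t A₁ (ι₁ f)) = B₂ (heatOp t A₂ (ι₂ f)))
    (f : D₀) (g : ℝ → ℝ) (hg : Continuous g) :
    B₁ (cfc g A₁ (ι₁ f)) = B₂ (cfc g A₂ (ι₂ f)) := by
  have hsa₁ : IsSelfAdjoint A₁ := hA₁.isSelfAdjoint
  have hsa₂ : IsSelfAdjoint A₂ := hA₂.isSelfAdjoint
  -- base equality B₁ ι₁ f = B₂ ι₂ f by taking t → 0⁺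
  have h1 : B₁ (ι₁ f) = B₂ (ι₂ f) := by
    have hc₁ : Continuous fun t : ℝ => heatOp t A₁ :=
      continuous_cfc_param A₁ hsa₁ (fun t x => Real.exp (-(t * x))) (by fun_prop)
    have hc₂ : Continuous fun t : ℝ => heatOp t A₂ :=
      continuous_cfc_param A₂ hsa₂ (fun t x => Real.exp (-(t * x))) (by fun_prop)
    have h0₁ : heatOp 0 A₁ = 1 := by
      rw [heatOp]
      simp only [zero_mul, neg_zero, Real.exp_zero]
      exact cfc_const_one ℝ A₁
    have h0₂ : heatOp 0 A₂ = 1 := by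
      rw [heatOp]
      simp only [zero_mul, neg_zero, Real.exp_zero]
      exact cfc_const_one ℝ A₂
    have l₁ : Filter.Tendsto (fun t => B₁ (heatOp t A₁ (ι₁ f))) (𝓝[>] (0:ℝ))
        (𝓝 (B₁ (ι₁ f))) := by
      have hcc : Continuous fun t => B₁ (heatOp t A₁ (ι₁ f)) :=
        B₁.continuous.comp (hc₁.clm_apply continuous_const)
      have := hcc.tendsto 0
      rw [h0₁] at this
      simpa using this.mono_left nhdsWithin_le_nhds
    have l₂ : Filter.Tendsto (fun t => B₂ (heatOp t A₂ (ι₂ f))) (𝓝[>] (0:ℝ))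
        (𝓝 (B₂ (ι₂ f))) := by
      have hcc : Continuous fun t => B₂ (heatOp t A₂ (ι₂ f)) :=
        B₂.continuous.comp (hc₂.clm_apply continuous_const)
      have := hcc.tendsto 0
      rw [h0₂] at this
      simpa using this.mono_left nhdsWithin_le_nhds
    have hev : (fun t => B₁ (heatOp t A₁ (ι₁ f))) =ᶠ[𝓝[>] (0:ℝ)]
        (fun t => B₂ (heatOp t A₂ (ι₂ f))) := by
      filter_upwards [self_mem_nhdsWithin] with t ht
      exact heq f t ht
    exact tendsto_nhds_unique (l₁.congr' hev) l₂
  -- Stone–Weierstrass setup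
  set M : ℝ := max ‖A₁‖ ‖A₂‖ with hMdef
  set K : Set ℝ := Set.Icc 0 M with hKdef
  have hK₁ : spectrum ℝ A₁ ⊆ K :=
    (spec_subset A₁ hA₁).trans (Set.Icc_subset_Icc le_rfl (le_max_left _ _))
  have hK₂ : spectrum ℝ A₂ ⊆ K :=
    (spec_subset A₂ hA₂).trans (Set.Icc_subset_Icc le_rfl (le_max_right _ _))
  haveI : CompactSpace K := isCompact_iff_compactSpace.mp isCompact_Icc
  let i₁ : C(spectrum ℝ A₁, K) := ⟨Set.inclusion hK₁, continuous_inclusion hK₁⟩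
  let i₂ : C(spectrum ℝ A₂, K) := ⟨Set.inclusion hK₂, continuous_inclusion hK₂⟩
  let Ψ₁ : C(K, ℝ) →ₐ[ℝ] C(spectrum ℝ A₁, ℝ) := ContinuousMap.compRightAlgHom ℝ ℝ i₁
  let Ψ₂ : C(K, ℝ) →ₐ[ℝ] C(spectrum ℝ A₂, ℝ) := ContinuousMap.compRightAlgHom ℝ ℝ i₂
  let Φ : C(K, ℝ) → D := fun q =>
    B₁ (cfcHom hsa₁ (Ψ₁ q) (ι₁ f)) - B₂ (cfcHom hsa₂ (Ψ₂ q) (ι₂ f))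
  have hΦc : Continuous Φ := by
    apply Continuous.sub
    · exact B₁.continuous.comp
        (((cfcHom_isClosedEmbedding hsa₁).continuous.comp
          (ContinuousMap.compRightAlgHom_continuous ℝ ℝ i₁)).clm_apply continuous_const)
    · exact B₂.continuous.comp
        (((cfcHom_isClosedEmbedding hsa₂).continuous.comp
          (ContinuousMap.compRightAlgHom_continuous ℝ ℝ i₂)).clm_apply continuous_const)
  have hZ : IsClosed {q : C(K, ℝ) | Φ q = 0} :=
    isClosed_eq hΦc continuous_const
  -- generators
  let E : Set C(K, ℝ) := {q | ∃ t : ℝ, 0 < t ∧ q = expCM K t}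
  have hheat : ∀ t : ℝ, 0 < t → Φ (expCM K t) = 0 := by
    intro t ht
    have e₁ : cfcHom hsa₁ (Ψ₁ (expCM K t)) = heatOp t A₁ := by
      rw [heatOp, cfc_apply _ A₁ hsa₁ (Continuous.continuousOn (by fun_prop))]
      rfl
    have e₂ : cfcHom hsa₂ (Ψ₂ (expCM K t)) = heatOp t A₂ := by
      rw [heatOp, cfc_apply _ A₂ hsa₂ (Continuous.continuousOn (by fun_prop))]
      rfl
    simp only [Φ, e₁, e₂, heq f t ht, sub_self]
  have hmem : ∀ q ∈ expSubmonoid K, Φ q = 0 := by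
    rintro q (rfl | ⟨t, ht, rfl⟩)
    · simp only [Φ, map_one]
      simp [h1]
    · exact hheat t ht
  -- Z ⊇ adjoin
  have hSZ : ∀ q ∈ Algebra.adjoin ℝ E, Φ q = 0 := by
    intro q hq
    have hq' : q ∈ Submodule.span ℝ ((Submonoid.closure E : Submonoid C(K, ℝ)) : Set C(K, ℝ)) := by
      rw [← Algebra.adjoin_eq_span]
      exact hq
    have hcl : (Submonoid.closure E : Submonoid C(K, ℝ)) ≤ expSubmonoid K :=
      Submonoid.closure_le.mpr (fun q hq => Or.inr hq)
    refine Submodule.span_induction (fun x hx => hmem x (hcl hx)) ?_ ?_ ?_ hq'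
    · simp [Φ, map_zero]
    · intro a b _ _ ha hb
      have : Φ (a + b) = Φ a + Φ b := by
        simp only [Φ, map_add, ContinuousLinearMap.add_apply]
        abel
      rw [this, ha, hb, add_zero]
    · intro r a _ ha
      have : Φ (r • a) = r • Φ a := by
        simp only [Φ, _root_.map_smul, ContinuousLinearMap.smul_apply,
          ContinuousLinearMap.map_smul_of_tower, smul_sub]
      rw [this, ha, smul_zero]
  -- density
  have hsep : (Algebra.adjoin ℝ E).SeparatesPoints := by
    intro x y hxy
    refine ⟨_, ⟨expCM K 1, Algebra.subset_adjoin ⟨1, one_pos, rfl⟩, rfl⟩, ?_⟩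
    simp only [expCM, ContinuousMap.coe_mk]
    intro h
    apply hxy
    have := Real.exp_injective h
    have : (x : ℝ) = (y : ℝ) := by linarith [this]
    exact Subtype.ext this
  have htop : (Algebra.adjoin ℝ E).topologicalClosure = ⊤ :=
    ContinuousMap.subalgebra_topologicalClosure_eq_top_of_separatesPoints _ hsep
  have hall : ∀ q : C(K, ℝ), Φ q = 0 := by
    intro q
    have hsub : ((Algebra.adjoin ℝ E).topologicalClosure : Set C(K, ℝ)) ⊆ {q | Φ q = 0} := by
      rw [Subalgebra.topologicalClosure_coe]
      exact closure_minimal hSZ hZ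
    apply hsub
    rw [htop]
    trivial
  -- conclude
  have := hall ⟨K.restrict g, hg.continuousOn.restrict⟩
  have e₁ : cfcHom hsa₁ (Ψ₁ ⟨K.restrict g, hg.continuousOn.restrict⟩) = cfc g A₁ := by
    rw [cfc_apply g A₁ hsa₁ hg.continuousOn]
    rfl
  have e₂ : cfcHom hsa₂ (Ψ₂ ⟨K.restrict g, hg.continuousOn.restrict⟩) = cfc g A₂ := by
    rw [cfc_apply g A₂ hsa₂ hg.continuousOn]
    rfl
  simp only [Φ, e₁, e₂, sub_eq_zero] at this
  exact this

/-- **Proposition 2 (bounded case).** If `B₁ e^{−tA₁} ι₁ f = B₂ e^{−tA₂} ι₂ f` for every `t > 0`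
and every `f ∈ D₀`, then for every `F : ℝ → D₀` with `ι_j ∘ F` smooth and compactly supported in
`(0,∞)`, the restrictions `B₁ W_{A₁}(F)` and `B₂ W_{A₂}(F)` of the solutions of the wave
equations coincide:
`B₁ ∫₀^t S(t−s, A₁) ι₁F(s) ds = B₂ ∫₀^t S(t−s, A₂) ι₂F(s) ds` for every `t ≥ 0`. -/
theorem proposition2
    {H₁ H₂ : Type*}
    [NormedAddCommGroup H₁] [InnerProductSpace ℂ H₁] [CompleteSpace H₁]
    [NormedAddCommGroup H₂] [InnerProductSpace ℂ H₂] [CompleteSpace H₂]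
    {D : Type*} [NormedAddCommGroup D] [NormedSpace ℂ D]
    {D₀ : Type*} [AddCommGroup D₀] [Module ℂ D₀]
    (A₁ : H₁ →L[ℂ] H₁) (hA₁ : A₁.IsPositive)
    (A₂ : H₂ →L[ℂ] H₂) (hA₂ : A₂.IsPositive)
    (B₁ : H₁ →L[ℂ] D) (B₂ : H₂ →L[ℂ] D)
    (ι₁ : D₀ →ₗ[ℂ] H₁) (ι₂ : D₀ →ₗ[ℂ] H₂)
    (heq : ∀ (f : D₀) (t : ℝ), 0 < t →
      B₁ (heatOp t A₁ (ι₁ f)) = B₂ (heatOp t A₂ (ι₂ f)))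
    (F : ℝ → D₀)
    (hF₁ : ContDiff ℝ (⊤ : ℕ∞) (fun s : ℝ => ι₁ (F s)))
    (hF₂ : ContDiff ℝ (⊤ : ℕ∞) (fun s : ℝ => ι₂ (F s)))
    (hFc₁ : HasCompactSupport (fun s : ℝ => ι₁ (F s)))
    (hFc₂ : HasCompactSupport (fun s : ℝ => ι₂ (F s)))
    (hFs₁ : tsupport (fun s : ℝ => ι₁ (F s)) ⊆ Ioi (0 : ℝ))
    (hFs₂ : tsupport (fun s : ℝ => ι₂ (F s)) ⊆ Ioi (0 : ℝ)) :
    ∀ t : ℝ, 0 ≤ t →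
      B₁ (∫ s in (0 : ℝ)..t, waveKernel (t - s) A₁ (ι₁ (F s))) =
      B₂ (∫ s in (0 : ℝ)..t, waveKernel (t - s) A₂ (ι₂ (F s))) := by
  intro t ht
  have hsa₁ : IsSelfAdjoint A₁ := hA₁.isSelfAdjoint
  have hsa₂ : IsSelfAdjoint A₂ := hA₂.isSelfAdjoint
  have w₁ : ∀ τ : ℝ, waveKernel τ A₁ = cfc (gwave τ) A₁ := fun τ =>
    cfc_congr (fun x hx => gwave_eq τ (spec_subset A₁ hA₁ hx).1)
  have w₂ : ∀ τ : ℝ, waveKernel τ A₂ = cfc (gwave τ) A₂ := fun τ =>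
    cfc_congr (fun x hx => gwave_eq τ (spec_subset A₂ hA₂ hx).1)
  have hcw₁ : Continuous fun s : ℝ => (cfc (gwave (t - s)) A₁) (ι₁ (F s)) :=
    (((continuous_cfc_param A₁ hsa₁ gwave continuous_gwave).comp
      (continuous_const.sub continuous_id)).clm_apply hF₁.continuous)
  have hcw₂ : Continuous fun s : ℝ => (cfc (gwave (t - s)) A₂) (ι₂ (F s)) :=
    (((continuous_cfc_param A₂ hsa₂ gwave continuous_gwave).comp
      (continuous_const.sub continuous_id)).clm_apply hF₂.continuous)
  simp only [w₁, w₂]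
  let J : D →L[ℂ] UniformSpace.Completion D := UniformSpace.Completion.toComplL
  have hJ : Function.Injective J := by
    have : ⇑J = ((↑) : D → UniformSpace.Completion D) := UniformSpace.Completion.coe_toComplL
    rw [this]
    exact UniformSpace.Completion.coe_injective D
  apply hJ
  have heq' : ∀ (f : D₀) (u : ℝ), 0 < u →
      (J.comp B₁) (heatOp u A₁ (ι₁ f)) = (J.comp B₂) (heatOp u A₂ (ι₂ f)) :=
    fun f u hu => congrArg J (heq f u hu)
  show (J.comp B₁) (∫ s in (0:ℝ)..t, (cfc (gwave (t - s)) A₁) (ι₁ (F s))) =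
    (J.comp B₂) (∫ s in (0:ℝ)..t, (cfc (gwave (t - s)) A₂) (ι₂ (F s)))
  rw [← ContinuousLinearMap.intervalIntegral_comp_comm (J.comp B₁) (hcw₁.intervalIntegrable 0 t),
    ← ContinuousLinearMap.intervalIntegral_comp_comm (J.comp B₂) (hcw₂.intervalIntegrable 0 t)]
  apply intervalIntegral.integral_congr
  intro s _
  exact key_lemma A₁ hA₁ A₂ hA₂ (J.comp B₁) (J.comp B₂) ι₁ ι₂ heq' (F s) (gwave (t - s))
    (continuous_gwave.comp (continuous_const.prodMk continuous_id))
end
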